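/- arXiv:2409.00245 — 10 statements merged into one kernel-verified Lean document; each statement's English description precedes it below -/
import Mathlib

section
/- If a graph G has a crown decomposition, i.e., a partition of V(G) into an independent set I (nonempty), a head H containing all neighbors of I, and remainder R, such that G[I ∪ H] contains a matching of size |H|, then there exists a minimum vertex cover of G containing all vertices of H and no vertices of I. -/
/-!
The `|H|` matching edges of `G[I ∪ H]` are pairwise disjoint, so every vertex cover spends at
least `|H|` vertices inside `I ∪ H`. Hence replacing the part of a minimum cover lying in `I ∪ H`
by `H` does not increase its size, and the result is still a cover because every edge leaving `I`
ends in `H`.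
-/

open Finset

theorem Finset.card_union_sdiff_le_of_card_le_card_inter {V : Type*} [DecidableEq V]
    {C H S : Finset V} (h : #H ≤ #(C ∩ S)) : #(H ∪ (C \ S)) ≤ #C :=
  calc #(H ∪ (C \ S)) ≤ #H + #(C \ S) := card_union_le _ _
    _ ≤ #(C ∩ S) + #(C \ S) := Nat.add_le_add_right h _
    _ = #C := card_inter_add_card_sdiff C S

namespace SimpleGraph

variable {V : Type*} {G : SimpleGraph V}

theorem exists_isVertexCover_forall_card_le [Fintype V] (G : SimpleGraph V) :
    ∃ C : Finset V, G.IsVertexCover C ∧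
      ∀ C' : Finset V, G.IsVertexCover C' → #C ≤ #C' := by
  classical
  obtain ⟨C, hC, hmin⟩ := exists_min_image {C : Finset V | G.IsVertexCover C} card
    ⟨univ, by simp [IsVertexCover]⟩
  exact ⟨C, (mem_filter.1 hC).2, fun C' hC' => hmin C' (mem_filter.2 ⟨mem_univ _, hC'⟩)⟩

/-- Choosing for each edge of `M` an endpoint in `C` is injective, as the edges are disjoint. -/
theorem IsVertexCover.card_le_card_inter [DecidableEq V] {C S : Finset V}
    (hC : G.IsVertexCover C) {M : Finset (V × V)}
    (hMadj : ∀ e ∈ M, G.Adj e.1 e.2 ∧ e.1 ∈ S ∧ e.2 ∈ S)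
    (hMdisj : ∀ e ∈ M, ∀ e' ∈ M, e ≠ e' →
      e.1 ≠ e'.1 ∧ e.1 ≠ e'.2 ∧ e.2 ≠ e'.1 ∧ e.2 ≠ e'.2) :
    #M ≤ #(C ∩ S) := by
  refine card_le_card_of_injOn (fun e => if e.1 ∈ C then e.1 else e.2) ?_ ?_
  · intro e he
    obtain ⟨hadj, h1, h2⟩ := hMadj e he
    have := hC hadj
    simp only [coe_inter, Set.mem_inter_iff, mem_coe]
    split_ifs <;> tauto
  · intro e he e' he' hee'
    by_contra hne
    have := hMdisj e he e' he' hne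
    simp only at hee'
    split_ifs at hee' <;> tauto

theorem IsVertexCover.union_sdiff_union [DecidableEq V] {C I H : Finset V}
    (hC : G.IsVertexCover C) (hNI : ∀ u ∈ I, ∀ v : V, G.Adj u v → v ∈ H) :
    G.IsVertexCover ↑(H ∪ (C \ (I ∪ H))) := by
  intro u v huv
  have hu := hNI u
  have hv := hNI v
  have := hC huv
  simp only [coe_union, coe_sdiff, Set.mem_union, Set.mem_sdiff, mem_coe] at this ⊢
  grind [huv.symm]

end SimpleGraph

theorem crown_decomposition_general {V : Type} [Fintype V] [DecidableEq V] (G : SimpleGraph V)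
    (I H : Finset V)
    (hIH : Disjoint I H)
    (hNI : ∀ u ∈ I, ∀ v : V, G.Adj u v → v ∈ H)
    (hM : ∃ M : Finset (V × V), M.card = H.card ∧
      (∀ e ∈ M, G.Adj e.1 e.2 ∧ e.1 ∈ I ∪ H ∧ e.2 ∈ I ∪ H) ∧
      (∀ e ∈ M, ∀ e' ∈ M, e ≠ e' →
        e.1 ≠ e'.1 ∧ e.1 ≠ e'.2 ∧ e.2 ≠ e'.1 ∧ e.2 ≠ e'.2)) :
    ∃ C : Finset V, (∀ u v : V, G.Adj u v → u ∈ C ∨ v ∈ C) ∧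
      (∀ C' : Finset V, (∀ u v : V, G.Adj u v → u ∈ C' ∨ v ∈ C') → C.card ≤ C'.card) ∧
      H ⊆ C ∧ Disjoint C I := by
  obtain ⟨M, hMcard, hMadj, hMdisj⟩ := hM
  obtain ⟨C, hC, hCmin⟩ := G.exists_isVertexCover_forall_card_le
  have hcover := hC.union_sdiff_union hNI
  have hcard : #(H ∪ (C \ (I ∪ H))) ≤ #C :=
    card_union_sdiff_le_of_card_le_card_inter (hMcard ▸ hC.card_le_card_inter hMadj hMdisj)
  refine ⟨H ∪ (C \ (I ∪ H)), fun u v huv => hcover huv,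
    fun C' hC' => hcard.trans (hCmin C' fun u v huv => hC' u v huv), subset_union_left, ?_⟩
  rw [disjoint_union_left]
  exact ⟨hIH.symm, disjoint_sdiff_self_left.mono_right subset_union_left⟩

/-- **Crown decomposition lemma.** If a finite graph `G` has a crown decomposition
`(I, H, R)` — `I` a nonempty independent set, `H` containing all neighbors of `I`,
and `G[I ∪ H]` containing a matching of size `|H|` — then there is a minimum vertex
cover of `G` containing all of `H` and avoiding `I`. -/
theorem crown_decomposition {V : Type} [Fintype V] [DecidableEq V] (G : SimpleGraph V)
    (I H R : Finset V)
    (hpart : I ∪ H ∪ R = Finset.univ)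
    (hIH : Disjoint I H) (hIR : Disjoint I R) (hHR : Disjoint H R)
    (hIne : I.Nonempty)
    (hInd : ∀ u ∈ I, ∀ v ∈ I, ¬ G.Adj u v)
    (hNI : ∀ u ∈ I, ∀ v : V, G.Adj u v → v ∈ H)
    (hM : ∃ M : Finset (V × V), M.card = H.card ∧
      (∀ e ∈ M, G.Adj e.1 e.2 ∧ e.1 ∈ I ∪ H ∧ e.2 ∈ I ∪ H) ∧
      (∀ e ∈ M, ∀ e' ∈ M, e ≠ e' →
        e.1 ≠ e'.1 ∧ e.1 ≠ e'.2 ∧ e.2 ≠ e'.1 ∧ e.2 ≠ e'.2)) :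
    ∃ C : Finset V, (∀ u v : V, G.Adj u v → u ∈ C ∨ v ∈ C) ∧
      (∀ C' : Finset V, (∀ u v : V, G.Adj u v → u ∈ C' ∨ v ∈ C') → C.card ≤ C'.card) ∧
      H ⊆ C ∧ Disjoint C I :=
  crown_decomposition_general G I H hIH hNI hM
end

section
/- If (A_B, A_C, A_R) is a tight odd cycle cut in a graph G, then oct(G) = |A_C| + oct(G[A_R]). In particular, A_C is contained in some minimum-size odd cycle transversal of G. -/
open SimpleGraph

/-- `S` is an odd cycle transversal of `G`: removing `S` leaves a bipartite graph. -/
def IsOCT {W : Type*} (G : SimpleGraph W) (S : Set W) : Prop :=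
  (G.induce Sᶜ).Colorable 2

/-- The minimum size of an odd cycle transversal of `G`. -/
noncomputable def oct {W : Type*} (G : SimpleGraph W) : ℕ :=
  sInf {n | ∃ S : Set W, S.ncard = n ∧ IsOCT G S}

/-- `(XB, XC, XR)` is an odd cycle cut of `G`. -/
def IsOCC {V : Type*} (G : SimpleGraph V) (XB XC XR : Set V) : Prop :=
  XB ∪ XC ∪ XR = Set.univ ∧ Disjoint XB XC ∧ Disjoint XB XR ∧ Disjoint XC XR ∧
  (G.induce XB).Colorable 2 ∧
  (∀ u ∈ XB, ∀ v ∈ XR, ¬ G.Adj u v) ∧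
  (XB ∪ XC).Nonempty

lemma colorable_induce_iff {V : Type*} (G : SimpleGraph V) (A : Set V) :
    (G.induce A).Colorable 2 ↔
      ∃ f : V → Fin 2, ∀ u ∈ A, ∀ v ∈ A, G.Adj u v → f u ≠ f v := by
  classical
  constructor
  · rintro ⟨C⟩
    refine ⟨fun v => if h : v ∈ A then C ⟨v, h⟩ else 0, ?_⟩
    intro u hu v hv hadj
    simp only [dif_pos hu, dif_pos hv]
    exact C.valid hadj
  · rintro ⟨f, hf⟩
    exact ⟨SimpleGraph.Coloring.mk (fun x => f x.val)
      (fun {u v} h => hf u.val u.2 v.val v.2 h)⟩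

lemma oct_induce_le {V : Type} [Fintype V] (G : SimpleGraph V) (A S : Set V) (hS : S ⊆ A)
    (f : V → Fin 2) (hf : ∀ u ∈ A \ S, ∀ v ∈ A \ S, G.Adj u v → f u ≠ f v) :
    oct (G.induce A) ≤ S.ncard := by
  apply Nat.sInf_le
  refine ⟨Subtype.val ⁻¹' S, ?_, ?_⟩
  · have hinj : Function.Injective (Subtype.val : ↥A → V) := Subtype.val_injective
    rw [← Set.ncard_image_of_injective _ hinj, Subtype.image_preimage_coe,
      Set.inter_eq_right.mpr hS]
  · rw [IsOCT, colorable_induce_iff]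
    refine ⟨fun x => f x.val, ?_⟩
    intro u hu v hv hadj
    exact hf u.val ⟨u.2, hu⟩ v.val ⟨v.2, hv⟩ hadj

lemma exists_min_oct_induce {V : Type} [Fintype V] (G : SimpleGraph V) (A : Set V) :
    ∃ S : Set V, S ⊆ A ∧ S.ncard = oct (G.induce A) ∧
      ∃ f : V → Fin 2, ∀ u ∈ A \ S, ∀ v ∈ A \ S, G.Adj u v → f u ≠ f v := by
  classical
  have hne : {n | ∃ S : Set ↥A, S.ncard = n ∧ IsOCT (G.induce A) S}.Nonempty := by
    refine ⟨(Set.univ : Set ↥A).ncard, Set.univ, rfl, ?_⟩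
    rw [IsOCT, colorable_induce_iff]
    exact ⟨fun _ => 0, fun u hu => absurd (Set.mem_univ u) hu⟩
  obtain ⟨S₀, hcard, hoct⟩ := Nat.sInf_mem hne
  rw [IsOCT, colorable_induce_iff] at hoct
  obtain ⟨g, hg⟩ := hoct
  refine ⟨Subtype.val '' S₀, ?_, ?_, ?_⟩
  · rintro x ⟨y, _, rfl⟩; exact y.2
  · rw [Set.ncard_image_of_injective _ Subtype.val_injective]; exact hcard
  · refine ⟨fun v => if h : v ∈ A then g ⟨v, h⟩ else 0, ?_⟩
    intro u hu v hv hadj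
    have hu' : (⟨u, hu.1⟩ : ↥A) ∈ (S₀ᶜ : Set ↥A) := fun hm => hu.2 ⟨_, hm, rfl⟩
    have hv' : (⟨v, hv.1⟩ : ↥A) ∈ (S₀ᶜ : Set ↥A) := fun hm => hv.2 ⟨_, hm, rfl⟩
    simp only [dif_pos hu.1, dif_pos hv.1]
    exact hg _ hu' _ hv' hadj

/-- If `(AB, AC, AR)` is a tight odd cycle cut of `G` (i.e. `|AC| = oct(G[AC ∪ AB])`),
then `oct(G) = |AC| + oct(G[AR])`, and `AC` is contained in some minimum-size odd cycle
transversal of `G`. -/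
theorem tight_occ_oct {V : Type} [Fintype V] (G : SimpleGraph V)
    (AB AC AR : Set V) (h : IsOCC G AB AC AR)
    (htight : AC.ncard = oct (G.induce (AC ∪ AB))) :
    oct G = AC.ncard + oct (G.induce AR) ∧
    ∃ S : Set V, IsOCT G S ∧ (∀ S' : Set V, IsOCT G S' → S.ncard ≤ S'.ncard) ∧
      AC ⊆ S := by
  classical
  obtain ⟨huniv, dBC, dBR, dCR, hBcol, noedge, -⟩ := h
  -- vertex trichotomy
  have hmem : ∀ x : V, x ∈ AB ∨ x ∈ AC ∨ x ∈ AR := by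
    intro x
    have : x ∈ AB ∪ AC ∪ AR := huniv ▸ Set.mem_univ x
    rcases this with (hx | hx) | hx
    · exact Or.inl hx
    · exact Or.inr (Or.inl hx)
    · exact Or.inr (Or.inr hx)
  obtain ⟨fB, hfB⟩ := (colorable_induce_iff G AB).mp hBcol
  -- minimum transversal of G[AR]
  obtain ⟨T, hTsub, hTcard, fR, hfR⟩ := exists_min_oct_induce G AR
  set S : Set V := AC ∪ T with hSdef
  -- S is an OCT of G
  have hSoct : IsOCT G S := by
    rw [IsOCT, colorable_induce_iff]
    refine ⟨fun v => if v ∈ AB then fB v else fR v, ?_⟩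
    intro u hu v hv hadj
    have hu1 : u ∉ AC := fun hx => hu (Or.inl hx)
    have hu2 : u ∉ T := fun hx => hu (Or.inr hx)
    have hv1 : v ∉ AC := fun hx => hv (Or.inl hx)
    have hv2 : v ∉ T := fun hx => hv (Or.inr hx)
    have hcase : ∀ x : V, x ∉ AC → x ∈ AB ∨ x ∈ AR := by
      intro x hx
      rcases hmem x with hx' | hx' | hx'
      · exact Or.inl hx'
      · exact absurd hx' hx
      · exact Or.inr hx'
    rcases hcase u hu1 with huB | huR <;> rcases hcase v hv1 with hvB | hvR
    · simp only [if_pos huB, if_pos hvB]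
      exact hfB u huB v hvB hadj
    · exact absurd hadj (noedge u huB v hvR)
    · exact absurd hadj.symm (noedge v hvB u huR)
    · have : u ∉ AB := Set.disjoint_right.mp dBR huR
      have hv' : v ∉ AB := Set.disjoint_right.mp dBR hvR
      simp only [if_neg this, if_neg hv']
      exact hfR u ⟨huR, hu2⟩ v ⟨hvR, hv2⟩ hadj
  have dCT : Disjoint AC T := (Set.disjoint_of_subset_right hTsub dCR)
  have hScard : S.ncard = AC.ncard + oct (G.induce AR) := by
    rw [hSdef, Set.ncard_union_eq dCT (Set.toFinite _) (Set.toFinite _), hTcard]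
  -- lower bound for any OCT
  have hmin : ∀ S' : Set V, IsOCT G S' → AC.ncard + oct (G.induce AR) ≤ S'.ncard := by
    intro S' hS'
    rw [IsOCT, colorable_induce_iff] at hS'
    obtain ⟨f, hf⟩ := hS'
    have h1 : oct (G.induce (AC ∪ AB)) ≤ (S' ∩ (AC ∪ AB)).ncard := by
      refine oct_induce_le G _ _ Set.inter_subset_right f ?_
      intro u hu v hv hadj
      exact hf u (fun hx => hu.2 ⟨hx, hu.1⟩) v (fun hx => hv.2 ⟨hx, hv.1⟩) hadj
    have h2 : oct (G.induce AR) ≤ (S' ∩ AR).ncard := by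
      refine oct_induce_le G _ _ Set.inter_subset_right f ?_
      intro u hu v hv hadj
      exact hf u (fun hx => hu.2 ⟨hx, hu.1⟩) v (fun hx => hv.2 ⟨hx, hv.1⟩) hadj
    have hsplit : S' = (S' ∩ (AC ∪ AB)) ∪ (S' ∩ AR) := by
      ext x
      constructor
      · intro hx
        rcases hmem x with hx' | hx' | hx'
        · exact Or.inl ⟨hx, Or.inr hx'⟩
        · exact Or.inl ⟨hx, Or.inl hx'⟩
        · exact Or.inr ⟨hx, hx'⟩
      · rintro (⟨hx, -⟩ | ⟨hx, -⟩) <;> exact hx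
    have hdisj : Disjoint (S' ∩ (AC ∪ AB)) (S' ∩ AR) := by
      refine Set.disjoint_left.mpr ?_
      rintro x ⟨-, (hx | hx)⟩ ⟨-, hxR⟩
      · exact Set.disjoint_left.mp dCR hx hxR
      · exact Set.disjoint_left.mp dBR hx hxR
    have hsum : (S' ∩ (AC ∪ AB)).ncard + (S' ∩ AR).ncard = S'.ncard := by
      rw [← Set.ncard_union_eq hdisj (Set.toFinite _) (Set.toFinite _), ← hsplit]
    calc AC.ncard + oct (G.induce AR)
        ≤ (S' ∩ (AC ∪ AB)).ncard + (S' ∩ AR).ncard := by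
          exact Nat.add_le_add (htight ▸ h1) h2
      _ = S'.ncard := hsum
  -- oct G is attained
  have hneG : {n | ∃ S : Set V, S.ncard = n ∧ IsOCT G S}.Nonempty := by
    refine ⟨(Set.univ : Set V).ncard, Set.univ, rfl, ?_⟩
    rw [IsOCT, colorable_induce_iff]
    exact ⟨fun _ => 0, fun u hu => absurd (Set.mem_univ u) hu⟩
  obtain ⟨S₀, hS₀card, hS₀oct⟩ := Nat.sInf_mem hneG
  have hle : oct G ≤ AC.ncard + oct (G.induce AR) := by
    rw [← hScard]
    exact Nat.sInf_le ⟨S, rfl, hSoct⟩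
  have hge : AC.ncard + oct (G.induce AR) ≤ oct G := by
    have := hmin S₀ hS₀oct
    rwa [hS₀card] at this
  refine ⟨le_antisymm hle hge, S, hSoct, ?_, Set.subset_union_left⟩
  intro S' hS'
  rw [hScard]
  exact hmin S' hS'
end

section
/- Let (X_B, X_C, X_R) be an odd cycle cut in G and let (A_B, A_C, A_R) be a tight odd cycle cut in G. Then |A_C ∩ X_B| ≤ |X_C|. -/
open SimpleGraph

/-- If `(XB, XC, XR)` is an odd cycle cut and `(AB, AC, AR)` is a tight odd cycle cut
of the same graph `G`, then `|AC ∩ XB| ≤ |XC|`. -/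
theorem tight_occ_small_intersection {V : Type} [Fintype V] (G : SimpleGraph V)
    (XB XC XR AB AC AR : Set V)
    (hX : IsOCC G XB XC XR) (hA : IsOCC G AB AC AR)
    (htight : AC.ncard = oct (G.induce (AC ∪ AB))) :
    (AC ∩ XB).ncard ≤ XC.ncard := by
  classical
  obtain ⟨hXu, hXbc, hXbr, hXcr, ⟨cX⟩, hXnoedge, -⟩ := hX
  obtain ⟨hAu, hAbc, hAbr, hAcr, ⟨cA⟩, hAnoedge, -⟩ := hA
  set T : Set V := (AC \ XB) ∪ XC with hT
  set S : Set ↥(AC ∪ AB) := {v | (v : V) ∈ T} with hS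
  -- every surviving vertex outside XB is in AB
  have hmemAB : ∀ v : ↥(AC ∪ AB), (v : V) ∉ T → (v : V) ∉ XB → (v : V) ∈ AB := by
    rintro v hvT hvB
    rcases v.2 with h | h
    · exact absurd (Or.inl ⟨h, hvB⟩) hvT
    · exact h
  have hmemXR : ∀ v : V, v ∉ T → v ∉ XB → v ∈ XR := by
    intro v hvT hvB
    have : v ∈ XB ∪ XC ∪ XR := hXu ▸ Set.mem_univ v
    rcases this with (h | h) | h
    · exact absurd h hvB
    · exact absurd (Or.inr h) hvT
    · exact h
  -- S is an OCT of the induced graph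
  have hOCT : IsOCT (G.induce (AC ∪ AB)) S := by
    refine ⟨Coloring.mk
      (fun v => if h : (v : V) ∈ XB then cX ⟨(v : V), h⟩
        else cA ⟨(v : V), hmemAB v.1 v.2 h⟩) ?_⟩
    rintro ⟨u, hu⟩ ⟨v, hv⟩ hadj
    have hGadj : G.Adj (u : V) (v : V) := hadj
    by_cases hub : (u : V) ∈ XB <;> by_cases hvb : (v : V) ∈ XB
    · simp only [dif_pos hub, dif_pos hvb]
      exact cX.valid (by exact hGadj)
    · exact absurd hGadj (hXnoedge _ hub _ (hmemXR _ hv hvb))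
    · exact absurd hGadj.symm (hXnoedge _ hvb _ (hmemXR _ hu hub))
    · simp only [dif_neg hub, dif_neg hvb]
      exact cA.valid (by exact hGadj)
  -- cardinality bound on S
  have hScard : S.ncard ≤ T.ncard := by
    rw [show S.ncard = (Subtype.val '' S).ncard from
      (Set.ncard_image_of_injective _ Subtype.val_injective).symm]
    exact Set.ncard_le_ncard (by rintro x ⟨y, hy, rfl⟩; exact hy) T.toFinite
  have hoct : oct (G.induce (AC ∪ AB)) ≤ T.ncard :=
    le_trans (Nat.sInf_le ⟨S, rfl, hOCT⟩) hScard
  have hTcard : T.ncard ≤ (AC \ XB).ncard + XC.ncard := Set.ncard_union_le _ _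
  have hsplit : (AC ∩ XB).ncard + (AC \ XB).ncard = AC.ncard :=
    Set.ncard_inter_add_ncard_diff_eq_ncard AC XB AC.toFinite
  omega
end

section
/- Let W be an odd cycle transversal of a graph G, let W = W_0 ∪ W_1 be a partition of W into two independent sets, and let c be a proper 2-coloring of G − W. Define A = (N(W_0) ∩ c^{-1}(0)) ∪ (N(W_1) ∩ c^{-1}(1)) and R = (N(W_0) ∩ c^{-1}(1)) ∪ (N(W_1) ∩ c^{-1}(0)), both taken within V(G) \ W. Then for every X ⊆ V(G) \ W: the graph G − X admits a proper 2-coloring assigning color 0 to all of W_0 and color 1 to all of W_1 if and only if X separates A from R in the graph G − W. -/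
open SimpleGraph

private lemma fin2_flip {a b x y : Fin 2} (h1 : a ≠ b) (h2 : x ≠ y) : (a = x) ↔ (b = y) := by
  revert a b x y; decide

private lemma fin2_ne_zero {a : Fin 2} (h : a ≠ 0) : a = 1 := by revert a; decide

private lemma fin2_ne_one {a : Fin 2} (h : a ≠ 1) : a = 0 := by revert a; decide

private lemma fin2_add {x y : Fin 2} (h : x ≠ y) : x + 1 ≠ y + 1 := by revert x y; decide

private lemma fin2_cases (a : Fin 2) : a = 0 ∨ a = 1 := by revert a; decide

/-- **A–R separation lemma** (iterative compression for OCT). Let `W` be an odd cycle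
transversal of `G`, partitioned into independent sets `W0 ∪ W1`, and let `c` be a proper
2-coloring of `G − W`. With
`A = (N(W0) ∩ c⁻¹(0)) ∪ (N(W1) ∩ c⁻¹(1))` and `R = (N(W0) ∩ c⁻¹(1)) ∪ (N(W1) ∩ c⁻¹(0))`
(taken inside `V ∖ W`), for every `X ⊆ V ∖ W`: `G − X` has a proper 2-coloring giving
`W0` color 0 and `W1` color 1 iff `X` separates `A` from `R` in `G − W`. -/
theorem ar_separation {V : Type} [Fintype V] (G : SimpleGraph V)
    (W W0 W1 : Set V)
    (hpart : W0 ∪ W1 = W) (hdisj : Disjoint W0 W1)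
    (hW0 : ∀ u ∈ W0, ∀ v ∈ W0, ¬ G.Adj u v)
    (hW1 : ∀ u ∈ W1, ∀ v ∈ W1, ¬ G.Adj u v)
    (c : (G.induce Wᶜ).Coloring (Fin 2))
    (X : Set V) (hX : X ⊆ Wᶜ) :
    (∃ f : (G.induce Xᶜ).Coloring (Fin 2),
        (∀ (w : V) (hw : w ∈ Xᶜ), w ∈ W0 → f ⟨w, hw⟩ = 0) ∧
        (∀ (w : V) (hw : w ∈ Xᶜ), w ∈ W1 → f ⟨w, hw⟩ = 1)) ↔
    (∀ (u v : ↥((W ∪ X)ᶜ)),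
        (∃ hu : (u : V) ∈ Wᶜ, (c ⟨u, hu⟩ = 0 ∧ ∃ w0 ∈ W0, G.Adj w0 u) ∨
                               (c ⟨u, hu⟩ = 1 ∧ ∃ w1 ∈ W1, G.Adj w1 u)) →
        (∃ hv : (v : V) ∈ Wᶜ, (c ⟨v, hv⟩ = 1 ∧ ∃ w0 ∈ W0, G.Adj w0 v) ∨
                               (c ⟨v, hv⟩ = 0 ∧ ∃ w1 ∈ W1, G.Adj w1 v)) →
        ¬ (G.induce ((W ∪ X)ᶜ)).Reachable u v) := by
  classical
  have hSW : ∀ z : V, z ∈ (W ∪ X)ᶜ → z ∈ Wᶜ := fun z hz hw => hz (Or.inl hw)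
  have hSX : ∀ z : V, z ∈ (W ∪ X)ᶜ → z ∈ Xᶜ := fun z hz hw => hz (Or.inr hw)
  have hWX : ∀ z : V, z ∈ W → z ∈ Xᶜ := fun z hz hx => hX hx hz
  have hW0W : ∀ z : V, z ∈ W0 → z ∈ W := fun z hz => hpart ▸ Or.inl hz
  have hW1W : ∀ z : V, z ∈ W1 → z ∈ W := fun z hz => hpart ▸ Or.inr hz
  constructor
  · rintro ⟨f, hf0, hf1⟩ u v ⟨hu, hA⟩ ⟨hv, hR⟩ hreach
    have key : ∀ a b : ↥((W ∪ X)ᶜ), (G.induce ((W ∪ X)ᶜ)).Reachable a b →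
        ((f ⟨↑a, hSX _ a.2⟩ = c ⟨↑a, hSW _ a.2⟩) ↔ (f ⟨↑b, hSX _ b.2⟩ = c ⟨↑b, hSW _ b.2⟩)) := by
      intro a b h
      obtain ⟨p⟩ := h
      induction p with
      | nil => exact Iff.rfl
      | @cons x y z h p ih =>
        have hG : G.Adj ↑x ↑y := h
        have h1 : f ⟨↑x, hSX _ x.2⟩ ≠ f ⟨↑y, hSX _ y.2⟩ :=
          f.valid (show (G.induce Xᶜ).Adj ⟨↑x, hSX _ x.2⟩ ⟨↑y, hSX _ y.2⟩ from hG)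
        have h2 : c ⟨↑x, hSW _ x.2⟩ ≠ c ⟨↑y, hSW _ y.2⟩ :=
          c.valid (show (G.induce Wᶜ).Adj ⟨↑x, hSW _ x.2⟩ ⟨↑y, hSW _ y.2⟩ from hG)
        exact (fin2_flip h1 h2).trans ih
    have hfu : f ⟨↑u, hSX _ u.2⟩ ≠ c ⟨↑u, hSW _ u.2⟩ := by
      rcases hA with ⟨hc0, w0, hw0, haj⟩ | ⟨hc1, w1, hw1, haj⟩
      · have hfw : f ⟨w0, hWX _ (hW0W _ hw0)⟩ = 0 := hf0 _ _ hw0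
        have hne := f.valid
          (show (G.induce Xᶜ).Adj ⟨w0, hWX _ (hW0W _ hw0)⟩ ⟨↑u, hSX _ u.2⟩ from haj)
        rw [hfw] at hne
        have h2 : c ⟨↑u, hSW _ u.2⟩ = 0 := hc0
        rw [h2]
        exact Ne.symm hne
      · have hfw : f ⟨w1, hWX _ (hW1W _ hw1)⟩ = 1 := hf1 _ _ hw1
        have hne := f.valid
          (show (G.induce Xᶜ).Adj ⟨w1, hWX _ (hW1W _ hw1)⟩ ⟨↑u, hSX _ u.2⟩ from haj)
        rw [hfw] at hne
        have h2 : c ⟨↑u, hSW _ u.2⟩ = 1 := hc1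
        rw [h2]
        exact Ne.symm hne
    have hfv : f ⟨↑v, hSX _ v.2⟩ = c ⟨↑v, hSW _ v.2⟩ := by
      rcases hR with ⟨hc1, w0, hw0, haj⟩ | ⟨hc0, w1, hw1, haj⟩
      · have hfw : f ⟨w0, hWX _ (hW0W _ hw0)⟩ = 0 := hf0 _ _ hw0
        have hne := f.valid
          (show (G.induce Xᶜ).Adj ⟨w0, hWX _ (hW0W _ hw0)⟩ ⟨↑v, hSX _ v.2⟩ from haj)
        rw [hfw] at hne
        have h1 : f ⟨↑v, hSX _ v.2⟩ = 1 := fin2_ne_zero (Ne.symm hne)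
        have h2 : c ⟨↑v, hSW _ v.2⟩ = 1 := hc1
        rw [h1, h2]
      · have hfw : f ⟨w1, hWX _ (hW1W _ hw1)⟩ = 1 := hf1 _ _ hw1
        have hne := f.valid
          (show (G.induce Xᶜ).Adj ⟨w1, hWX _ (hW1W _ hw1)⟩ ⟨↑v, hSX _ v.2⟩ from haj)
        rw [hfw] at hne
        have h1 : f ⟨↑v, hSX _ v.2⟩ = 0 := fin2_ne_one (Ne.symm hne)
        have h2 : c ⟨↑v, hSW _ v.2⟩ = 0 := hc0
        rw [h1, h2]
    exact hfu ((key u v hreach).mpr hfv)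
  · intro hsep
    let Ac : ↥((W ∪ X)ᶜ) → Prop := fun z => ∃ hz : (z : V) ∈ Wᶜ,
        (c ⟨↑z, hz⟩ = 0 ∧ ∃ w0 ∈ W0, G.Adj w0 ↑z) ∨ (c ⟨↑z, hz⟩ = 1 ∧ ∃ w1 ∈ W1, G.Adj w1 ↑z)
    let Rc : ↥((W ∪ X)ᶜ) → Prop := fun z => ∃ hz : (z : V) ∈ Wᶜ,
        (c ⟨↑z, hz⟩ = 1 ∧ ∃ w0 ∈ W0, G.Adj w0 ↑z) ∨ (c ⟨↑z, hz⟩ = 0 ∧ ∃ w1 ∈ W1, G.Adj w1 ↑z)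
    let Fl : V → Prop := fun z => ∃ (hz : z ∈ (W ∪ X)ᶜ) (u : ↥((W ∪ X)ᶜ)),
        Ac u ∧ (G.induce ((W ∪ X)ᶜ)).Reachable u ⟨z, hz⟩
    let cc : V → Fin 2 := fun z => if hz : z ∈ Wᶜ then c ⟨z, hz⟩ else 0
    have hcc : ∀ (z : V) (hz : z ∈ Wᶜ), cc z = c ⟨z, hz⟩ := fun z hz => dif_pos hz
    let fc : ↥(Xᶜ) → Fin 2 := fun z =>
      if (z : V) ∈ W0 then 0 else if (z : V) ∈ W1 then 1
      else if Fl ↑z then cc ↑z + 1 else cc ↑z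
    have hFlA : ∀ z : ↥((W ∪ X)ᶜ), Ac z → Fl ↑z := fun z h => ⟨z.2, z, h, Reachable.refl _⟩
    have hFlR : ∀ z : ↥((W ∪ X)ᶜ), Rc z → ¬ Fl ↑z := by
      rintro z hr ⟨hz, u, hu, r⟩
      exact hsep u ⟨↑z, hz⟩ hu hr r
    have hFlinv : ∀ a b : ↥((W ∪ X)ᶜ), (G.induce ((W ∪ X)ᶜ)).Reachable a b →
        Fl ↑a → Fl ↑b := by
      rintro a b h ⟨ha, u, hu, r⟩
      exact ⟨b.2, u, hu, r.trans h⟩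
    have hfc0 : ∀ z : ↥(Xᶜ), (z : V) ∈ W0 → fc z = 0 := fun z h => if_pos h
    have hfc1 : ∀ z : ↥(Xᶜ), (z : V) ∈ W1 → fc z = 1 := by
      intro z h
      show (if (z : V) ∈ W0 then 0 else if (z : V) ∈ W1 then 1
        else if Fl ↑z then cc ↑z + 1 else cc ↑z) = 1
      rw [if_neg (Set.disjoint_right.mp hdisj h), if_pos h]
    have hfcS : ∀ z : ↥(Xᶜ), (z : V) ∉ W →
        fc z = if Fl ↑z then cc ↑z + 1 else cc ↑z := by
      intro z hzW
      show (if (z : V) ∈ W0 then 0 else if (z : V) ∈ W1 then 1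
        else if Fl ↑z then cc ↑z + 1 else cc ↑z) = _
      rw [if_neg (fun h => hzW (hW0W _ h)), if_neg (fun h => hzW (hW1W _ h))]
    have hstep0 : ∀ a b : ↥(Xᶜ), G.Adj ↑a ↑b → (a : V) ∈ W0 → (b : V) ∉ W → fc b = 1 := by
      intro a b hab ha0 hbW
      have hbWc : (b : V) ∈ Wᶜ := hbW
      have hbS : (b : V) ∈ (W ∪ X)ᶜ := fun h => h.elim hbW b.2
      rw [hfcS b hbW, hcc _ hbWc]
      rcases fin2_cases (c ⟨↑b, hbWc⟩) with h | h
      · rw [if_pos (hFlA ⟨↑b, hbS⟩ ⟨hbWc, Or.inl ⟨h, ↑a, ha0, hab⟩⟩), h]; decide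
      · rw [if_neg (hFlR ⟨↑b, hbS⟩ ⟨hbWc, Or.inl ⟨h, ↑a, ha0, hab⟩⟩), h]
    have hstep1 : ∀ a b : ↥(Xᶜ), G.Adj ↑a ↑b → (a : V) ∈ W1 → (b : V) ∉ W → fc b = 0 := by
      intro a b hab ha1 hbW
      have hbWc : (b : V) ∈ Wᶜ := hbW
      have hbS : (b : V) ∈ (W ∪ X)ᶜ := fun h => h.elim hbW b.2
      rw [hfcS b hbW, hcc _ hbWc]
      rcases fin2_cases (c ⟨↑b, hbWc⟩) with h | h
      · rw [if_neg (hFlR ⟨↑b, hbS⟩ ⟨hbWc, Or.inr ⟨h, ↑a, ha1, hab⟩⟩), h]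
      · rw [if_pos (hFlA ⟨↑b, hbS⟩ ⟨hbWc, Or.inr ⟨h, ↑a, ha1, hab⟩⟩), h]; decide
    have valid : ∀ a b : ↥(Xᶜ), G.Adj ↑a ↑b → fc a ≠ fc b := by
      intro a b hab
      by_cases ha0 : (a : V) ∈ W0
      · rw [hfc0 a ha0]
        by_cases hbW : (b : V) ∈ W
        · have hbW' : (b : V) ∈ W0 ∪ W1 := by rw [hpart]; exact hbW
          rcases hbW' with hb0 | hb1
          · exact absurd hab (hW0 _ ha0 _ hb0)
          · rw [hfc1 b hb1]; decide
        · rw [hstep0 a b hab ha0 hbW]; decide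
      · by_cases ha1 : (a : V) ∈ W1
        · rw [hfc1 a ha1]
          by_cases hbW : (b : V) ∈ W
          · have hbW' : (b : V) ∈ W0 ∪ W1 := by rw [hpart]; exact hbW
            rcases hbW' with hb0 | hb1
            · rw [hfc0 b hb0]; decide
            · exact absurd hab (hW1 _ ha1 _ hb1)
          · rw [hstep1 a b hab ha1 hbW]; decide
        · have haW : (a : V) ∉ W := by
            intro h
            have : (a : V) ∈ W0 ∪ W1 := by rw [hpart]; exact h
            exact this.elim ha0 ha1
          by_cases hb0 : (b : V) ∈ W0
          · rw [hfc0 b hb0, hstep0 b a hab.symm hb0 haW]; decide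
          · by_cases hb1 : (b : V) ∈ W1
            · rw [hfc1 b hb1, hstep1 b a hab.symm hb1 haW]; decide
            · have hbW : (b : V) ∉ W := by
                intro h
                have : (b : V) ∈ W0 ∪ W1 := by rw [hpart]; exact h
                exact this.elim hb0 hb1
              have haS : (a : V) ∈ (W ∪ X)ᶜ := fun h => h.elim haW a.2
              have hbS : (b : V) ∈ (W ∪ X)ᶜ := fun h => h.elim hbW b.2
              rw [hfcS a haW, hfcS b hbW, hcc _ haW, hcc _ hbW]
              have hr : (G.induce ((W ∪ X)ᶜ)).Reachable ⟨↑a, haS⟩ ⟨↑b, hbS⟩ :=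
                (show (G.induce ((W ∪ X)ᶜ)).Adj ⟨↑a, haS⟩ ⟨↑b, hbS⟩ from hab).reachable
              have hcne : c ⟨↑a, haW⟩ ≠ c ⟨↑b, hbW⟩ :=
                c.valid (show (G.induce Wᶜ).Adj ⟨↑a, haW⟩ ⟨↑b, hbW⟩ from hab)
              by_cases hfl : Fl ↑a
              · rw [if_pos hfl, if_pos (hFlinv _ _ hr hfl)]
                exact fin2_add hcne
              · rw [if_neg hfl, if_neg (fun h => hfl (hFlinv _ _ hr.symm h))]
                exact hcne
    refine ⟨⟨fc, fun {a b} hadj => valid a b hadj⟩, ?_, ?_⟩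
    · intro w hw hw0; exact hfc0 ⟨w, hw⟩ hw0
    · intro w hw hw1; exact hfc1 ⟨w, hw⟩ hw1
end

section
/- Let H be a graph containing two internally vertex-disjoint paths P_1 and P_2 of the same parity connecting the same endpoints u and v, such that every internal vertex of P_1 and P_2 has degree 2 in H. Then every minimum-size odd cycle transversal S of H satisfies S ∩ (V(P_1) ∪ V(P_2)) ⊆ {u, v}. -/
/-!
Let `I` be the set of internal vertices of the two paths. Given a proper 2-colouring `c` of
`H - T`, recolour `I` alternately along each path, starting from a colour `b` at `u`. Since every
vertex of `I` is adjacent only to its two path neighbours and the paths have the same parity, this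
is proper as soon as `u` and `v`, when they lie outside `T`, have colours `b` and `b + |P₁|`; so
`T \ I` is again an odd cycle transversal. Now let `S` be an odd cycle transversal meeting `I`.
Either `S \ I` is an odd cycle transversal, or `u, v ∉ S` and `S` meets the interior of both
paths (a path avoiding `S` forces `c v = c u + |P₁|`); in the latter case `insert u S \ I` is an
odd cycle transversal of size at most `|S| - 1`. Either way `S` is not minimum.
-/

open SimpleGraph

lemma isOCT_iff_exists_zmod_two {W : Type*} (G : SimpleGraph W) (S : Set W) :
    IsOCT G S ↔ ∃ c : W → ZMod 2, ∀ a b, a ∉ S → b ∉ S → G.Adj a b → c a ≠ c b := by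
  classical
  constructor
  · rintro ⟨C : (G.induce Sᶜ).Coloring (ZMod 2)⟩
    refine ⟨fun x => if h : x ∈ S then 0 else C ⟨x, h⟩, fun a b ha hb hab => ?_⟩
    simp only [dif_neg ha, dif_neg hb]
    exact C.valid (v := ⟨a, ha⟩) (w := ⟨b, hb⟩) hab
  · rintro ⟨c, hc⟩
    exact ⟨Coloring.mk (fun x => c x.1) fun {a b} hab => hc a b a.2 b.2 hab⟩

lemma ZMod.two_eq_add_one_of_ne {x y : ZMod 2} (h : x ≠ y) : y = x + 1 := by
  revert x y
  decide

namespace SimpleGraph.Walk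

variable {V : Type*} {G : SimpleGraph V} {u v : V}

def internalVertices (p : G.Walk u v) : Set V := {x | x ∈ p.support ∧ x ≠ u ∧ x ≠ v}

lemma forall_notMem_support_of_disjoint_internalVertices {p : G.Walk u v} {S : Set V}
    (hu : u ∉ S) (hv : v ∉ S) (hS : Disjoint S p.internalVertices) : ∀ x ∈ p.support, x ∉ S := by
  intro x hx hxS
  obtain rfl | hxu := eq_or_ne x u
  · exact hu hxS
  obtain rfl | hxv := eq_or_ne x v
  · exact hv hxS
  exact hS.notMem_of_mem_left hxS ⟨hx, hxu, hxv⟩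

lemma IsPath.idxOf_getVert [DecidableEq V] {p : G.Walk u v} (hp : p.IsPath) {i : ℕ}
    (hi : i ≤ p.length) : p.support.idxOf (p.getVert i) = i := by
  rw [p.getVert_eq_support_getElem hi]
  exact hp.support_nodup.idxOf_getElem _ _

lemma IsPath.neighborSet_getVert_of_degree_eq_two {p : G.Walk u v} (hp : p.IsPath) {i : ℕ}
    (h0 : i ≠ 0) (hi : i < p.length) [Fintype (G.neighborSet (p.getVert i))]
    (hdeg : G.degree (p.getVert i) = 2) :
    G.neighborSet (p.getVert i) = {p.getVert (i - 1), p.getVert (i + 1)} := by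
  rw [← hp.neighborSet_toSubgraph_internal h0 hi]
  refine (Set.eq_of_subset_of_ncard_le (p.toSubgraph.neighborSet_subset _) ?_).symm
  rw [hp.ncard_neighborSet_toSubgraph_internal_eq_two h0 hi, ← hdeg, ← card_neighborSet_eq_degree,
    Set.ncard_eq_toFinset_card', Set.toFinset_card]

lemma coloring_end_eq_start_add_length {S : Set V} {c : V → ZMod 2}
    (hc : ∀ a b, a ∉ S → b ∉ S → G.Adj a b → c a ≠ c b) (p : G.Walk u v)
    (hp : ∀ x ∈ p.support, x ∉ S) : c v = c u + p.length := by
  induction p with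
  | nil => simp
  | cons h q ih =>
    have hne := hc _ _ (hp _ (start_mem_support _)) (hp _ (by simp)) h
    rw [ih fun x hx => hp x (by simp [hx]), length_cons, Nat.cast_succ,
      ZMod.two_eq_add_one_of_ne hne]
    ring

lemma IsPath.ne_of_adj_of_mem_internalVertices [DecidableEq V] [G.LocallyFinite] {p : G.Walk u v}
    (hp : p.IsPath) {T : Set V} {f : V → ZMod 2} {b : ZMod 2}
    (hf : ∀ x ∈ p.internalVertices, f x = b + p.support.idxOf x)
    (hu : u ∉ T → f u = b) (hv : v ∉ T → f v = b + p.length)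
    {x y : V} (hx : x ∈ p.internalVertices) (hxT : x ∉ T) (hdeg : G.degree x = 2)
    (hy : y ∉ T) (hxy : G.Adj x y) : f x ≠ f y := by
  have hlabel : ∀ j ≤ p.length, p.getVert j ∉ T → f (p.getVert j) = b + j := by
    intro j hj hjT
    obtain rfl | hj0 := Nat.eq_zero_or_pos j
    · simpa using hu (by simpa using hjT)
    obtain rfl | hjl := hj.eq_or_lt
    · simpa using hv (by simpa using hjT)
    rw [hf _ ⟨p.getVert_mem_support j, (hp.getVert_eq_start_iff hj).not.mpr (by omega),
      (hp.getVert_eq_end_iff hj).not.mpr (by omega)⟩, hp.idxOf_getVert hj]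
  have hstep : ∀ k < p.length, p.getVert k ∉ T → p.getVert (k + 1) ∉ T →
      f (p.getVert k) ≠ f (p.getVert (k + 1)) := by
    intro k hk hkT hkT'
    rw [hlabel k hk.le hkT, hlabel (k + 1) hk hkT', Nat.cast_succ, ← add_assoc]
    exact (add_ne_left.mpr one_ne_zero).symm
  obtain ⟨i, rfl, hi⟩ := mem_support_iff_exists_getVert.mp hx.1
  have hi0 : i ≠ 0 := by rintro rfl; exact hx.2.1 p.getVert_zero
  have hil : i < p.length := hi.lt_of_ne fun h => hx.2.2 (h ▸ p.getVert_length)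
  have hy' : y ∈ G.neighborSet (p.getVert i) := hxy
  rw [hp.neighborSet_getVert_of_degree_eq_two hi0 hil hdeg] at hy'
  obtain ⟨k, rfl⟩ := Nat.exists_eq_add_one_of_ne_zero hi0
  rw [Nat.add_sub_cancel] at hy'
  obtain rfl | rfl := hy'
  · exact (hstep k (by omega) hy hxT).symm
  · exact hstep (k + 1) hil hxT hy

end SimpleGraph.Walk

section ParallelPaths

open Walk

variable {V : Type*} {G : SimpleGraph V} [G.LocallyFinite] {u v : V} {P₁ P₂ : G.Walk u v}

lemma isOCT_sdiff_internalVertices (h₁ : P₁.IsPath) (h₂ : P₂.IsPath)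
    (hpar : P₁.length % 2 = P₂.length % 2)
    (hdisj : Disjoint P₁.internalVertices P₂.internalVertices)
    (hdeg : ∀ x ∈ P₁.internalVertices ∪ P₂.internalVertices, G.degree x = 2)
    {T : Set V} {c : V → ZMod 2} (hc : ∀ a b, a ∉ T → b ∉ T → G.Adj a b → c a ≠ c b)
    {b : ZMod 2} (hu : u ∉ T → c u = b) (hv : v ∉ T → c v = b + P₁.length) :
    IsOCT G (T \ (P₁.internalVertices ∪ P₂.internalVertices)) := by
  classical
  set I₁ := P₁.internalVertices
  set I₂ := P₂.internalVertices
  set f : V → ZMod 2 := fun x =>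
    if x ∈ I₁ then b + P₁.support.idxOf x else if x ∈ I₂ then b + P₂.support.idxOf x else c x
  have hf₁ : ∀ x ∈ I₁, f x = b + P₁.support.idxOf x := fun x hx => if_pos hx
  have hf₂ : ∀ x ∈ I₂, f x = b + P₂.support.idxOf x := fun x hx =>
    (if_neg (hdisj.notMem_of_mem_right hx)).trans (if_pos hx)
  have hfc : ∀ x ∉ I₁ ∪ I₂, f x = c x := fun x hx =>
    (if_neg fun h => hx (.inl h)).trans (if_neg fun h => hx (.inr h))
  have huI : u ∉ I₁ ∪ I₂ := by rintro (⟨-, h, -⟩ | ⟨-, h, -⟩) <;> exact h rfl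
  have hvI : v ∉ I₁ ∪ I₂ := by rintro (⟨-, -, h⟩ | ⟨-, -, h⟩) <;> exact h rfl
  have hfu : u ∉ T \ (I₁ ∪ I₂) → f u = b := fun h =>
    (hfc u huI).trans (hu fun hT => h ⟨hT, huI⟩)
  have hfv₁ : v ∉ T \ (I₁ ∪ I₂) → f v = b + P₁.length := fun h =>
    (hfc v hvI).trans (hv fun hT => h ⟨hT, hvI⟩)
  have hfv₂ : v ∉ T \ (I₁ ∪ I₂) → f v = b + P₂.length := by
    rw [← (ZMod.natCast_eq_natCast_iff' _ _ 2).mpr hpar]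
    exact hfv₁
  have hinternal : ∀ x y, x ∈ I₁ ∪ I₂ → y ∉ T \ (I₁ ∪ I₂) → G.Adj x y → f x ≠ f y := by
    intro x y hx hy hxy
    have hxT : x ∉ T \ (I₁ ∪ I₂) := fun h => h.2 hx
    rcases hx with hx | hx
    · exact h₁.ne_of_adj_of_mem_internalVertices hf₁ hfu hfv₁ hx hxT (hdeg x (.inl hx)) hy hxy
    · exact h₂.ne_of_adj_of_mem_internalVertices hf₂ hfu hfv₂ hx hxT (hdeg x (.inr hx)) hy hxy
  refine (isOCT_iff_exists_zmod_two G _).mpr ⟨f, fun x y hx hy hxy => ?_⟩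
  by_cases hxI : x ∈ I₁ ∪ I₂
  · exact hinternal x y hxI hy hxy
  by_cases hyI : y ∈ I₁ ∪ I₂
  · exact (hinternal y x hyI hx hxy.symm).symm
  rw [hfc x hxI, hfc y hyI]
  exact hc x y (fun h => hx ⟨h, hxI⟩) (fun h => hy ⟨h, hyI⟩) hxy

lemma IsOCT.insert_sdiff_internalVertices (h₁ : P₁.IsPath) (h₂ : P₂.IsPath)
    (hpar : P₁.length % 2 = P₂.length % 2)
    (hdisj : Disjoint P₁.internalVertices P₂.internalVertices)
    (hdeg : ∀ x ∈ P₁.internalVertices ∪ P₂.internalVertices, G.degree x = 2)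
    {S : Set V} (hS : IsOCT G S) :
    IsOCT G (insert u S \ (P₁.internalVertices ∪ P₂.internalVertices)) := by
  obtain ⟨c, hc⟩ := (isOCT_iff_exists_zmod_two G S).mp hS
  refine isOCT_sdiff_internalVertices h₁ h₂ hpar hdisj hdeg (c := c) (b := c v - P₁.length)
    (fun a b ha hb => hc a b (fun h => ha (.inr h)) (fun h => hb (.inr h)))
    (fun h => absurd (Set.mem_insert u S) h) fun _ => by ring

lemma IsOCT.sdiff_internalVertices_of_disjoint (h₁ : P₁.IsPath) (h₂ : P₂.IsPath)
    (hpar : P₁.length % 2 = P₂.length % 2)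
    (hdisj : Disjoint P₁.internalVertices P₂.internalVertices)
    (hdeg : ∀ x ∈ P₁.internalVertices ∪ P₂.internalVertices, G.degree x = 2)
    {S : Set V} (hS : IsOCT G S)
    (hSP : Disjoint S P₁.internalVertices ∨ Disjoint S P₂.internalVertices) :
    IsOCT G (S \ (P₁.internalVertices ∪ P₂.internalVertices)) := by
  obtain ⟨c, hc⟩ := (isOCT_iff_exists_zmod_two G S).mp hS
  by_cases hu : u ∈ S
  · exact isOCT_sdiff_internalVertices h₁ h₂ hpar hdisj hdeg hc (b := c v - P₁.length)
      (absurd hu) fun _ => by ring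
  refine isOCT_sdiff_internalVertices h₁ h₂ hpar hdisj hdeg hc (b := c u) (fun _ => rfl)
    fun hv => ?_
  rcases hSP with hSP | hSP
  · exact coloring_end_eq_start_add_length hc P₁
      (forall_notMem_support_of_disjoint_internalVertices hu hv hSP)
  · rw [(ZMod.natCast_eq_natCast_iff' _ _ 2).mpr hpar]
    exact coloring_end_eq_start_add_length hc P₂
      (forall_notMem_support_of_disjoint_internalVertices hu hv hSP)

lemma IsOCT.exists_ncard_lt [Finite V] (h₁ : P₁.IsPath) (h₂ : P₂.IsPath)
    (hpar : P₁.length % 2 = P₂.length % 2)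
    (hdisj : Disjoint P₁.internalVertices P₂.internalVertices)
    (hdeg : ∀ x ∈ P₁.internalVertices ∪ P₂.internalVertices, G.degree x = 2)
    {S : Set V} (hS : IsOCT G S)
    (hSI : (S ∩ (P₁.internalVertices ∪ P₂.internalVertices)).Nonempty) :
    ∃ T, IsOCT G T ∧ T.ncard < S.ncard := by
  set I := P₁.internalVertices ∪ P₂.internalVertices
  have hcard := Set.ncard_inter_add_ncard_sdiff_eq_ncard S I
  by_cases hSI' : IsOCT G (S \ I)
  · refine ⟨_, hSI', ?_⟩
    have := (Set.ncard_pos (s := S ∩ I)).mpr hSI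
    omega
  obtain ⟨y₁, hy₁S, hy₁⟩ := Set.not_disjoint_iff.mp fun h =>
    hSI' (hS.sdiff_internalVertices_of_disjoint h₁ h₂ hpar hdisj hdeg (.inl h))
  obtain ⟨y₂, hy₂S, hy₂⟩ := Set.not_disjoint_iff.mp fun h =>
    hSI' (hS.sdiff_internalVertices_of_disjoint h₁ h₂ hpar hdisj hdeg (.inr h))
  have hy₁₂ : y₁ ≠ y₂ := fun h => hdisj.notMem_of_mem_left hy₁ (h ▸ hy₂)
  have h2le : 2 ≤ (S ∩ I).ncard := by
    rw [← Set.ncard_pair hy₁₂]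
    exact Set.ncard_le_ncard (Set.pair_subset ⟨hy₁S, .inl hy₁⟩ ⟨hy₂S, .inr hy₂⟩)
  refine ⟨insert u S \ I, hS.insert_sdiff_internalVertices h₁ h₂ hpar hdisj hdeg, ?_⟩
  have := (Set.ncard_le_ncard (Set.insert_sdiff_subset (a := u) (s := S) (t := I))).trans
    (Set.ncard_insert_le u (S \ I))
  omega

end ParallelPaths

theorem min_oct_avoids_parallel_paths_general {V : Type} [Fintype V]
    (H : SimpleGraph V) [DecidableRel H.Adj] {u v : V}
    (P1 P2 : H.Walk u v) (h1 : P1.IsPath) (h2 : P2.IsPath)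
    (hpar : P1.length % 2 = P2.length % 2)
    (hint : ∀ x, x ∈ P1.support → x ∈ P2.support → x = u ∨ x = v)
    (hdeg : ∀ x, (x ∈ P1.support ∨ x ∈ P2.support) → x ≠ u → x ≠ v → H.degree x = 2)
    (S : Set V) (hS : IsOCT H S)
    (hmin : ∀ S' : Set V, IsOCT H S' → S.ncard ≤ S'.ncard) :
    ∀ x ∈ S, (x ∈ P1.support ∨ x ∈ P2.support) → x = u ∨ x = v := by
  intro x hxS hx
  by_contra! hxuv
  have hdisj : Disjoint P1.internalVertices P2.internalVertices :=
    Set.disjoint_left.mpr fun y hy₁ hy₂ => (hint y hy₁.1 hy₂.1).elim hy₁.2.1 hy₁.2.2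
  have hdegI : ∀ y ∈ P1.internalVertices ∪ P2.internalVertices, H.degree y = 2 := by
    rintro y (⟨hy, hyu, hyv⟩ | ⟨hy, hyu, hyv⟩)
    exacts [hdeg y (.inl hy) hyu hyv, hdeg y (.inr hy) hyu hyv]
  obtain ⟨T, hT, hlt⟩ := hS.exists_ncard_lt h1 h2 hpar hdisj hdegI
    ⟨x, hxS, hx.imp (⟨·, hxuv⟩) (⟨·, hxuv⟩)⟩
  exact (hmin T hT).not_gt hlt

/-- If `P1` and `P2` are internally vertex-disjoint paths of the same parity between the
same endpoints `u, v`, all of whose internal vertices have degree 2 in `H`, then every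
minimum-size odd cycle transversal of `H` meets `V(P1) ∪ V(P2)` only in `{u, v}`. -/
theorem min_oct_avoids_parallel_paths {V : Type} [Fintype V] [DecidableEq V]
    (H : SimpleGraph V) [DecidableRel H.Adj] {u v : V}
    (P1 P2 : H.Walk u v) (h1 : P1.IsPath) (h2 : P2.IsPath)
    (hpar : P1.length % 2 = P2.length % 2)
    (hint : ∀ x, x ∈ P1.support → x ∈ P2.support → x = u ∨ x = v)
    (hdeg : ∀ x, (x ∈ P1.support ∨ x ∈ P2.support) → x ≠ u → x ≠ v → H.degree x = 2)
    (S : Set V) (hS : IsOCT H S)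
    (hmin : ∀ S' : Set V, IsOCT H S' → S.ncard ≤ S'.ncard) :
    ∀ x ∈ S, (x ∈ P1.support ∨ x ∈ P2.support) → x = u ∨ x = v :=
  min_oct_avoids_parallel_paths_general H P1 P2 h1 h2 hpar hint hdeg S hS hmin
end

section
/- For any set D of size n and integer k ≤ n, there exists a family U of subsets of D with |U| ≤ 2^{O(k)} · log n such that for every subset S ⊆ D with |S| ≤ k and every subset S' ⊆ S, there exists U ∈ U with U ∩ S = S'. -/
/-!
Probabilistic method. Draw `m` subsets of `D` independently and uniformly at random. For a fixed
`k`-set `S` and `S' ⊆ S`, a single draw `U` fails `U ∩ S = S'` with probability `1 - 2⁻ᵏ`, so all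
`m = 2ᵏ t` draws fail with probability at most `2⁻ᵗ`. There are `C(n, k) 2ᵏ ≤ 2^((log₂ n + 2) k)`
such pairs, so for `t` of order `k log n` the union bound leaves a family that shatters every
`k`-subset of `D`, hence every smaller subset too. The argument is carried out by counting.
-/

open Finset

theorem exists_subset_card_le_forall_exists_of_card_mul_pow_lt {β γ : Type*} [DecidableEq β]
    (Ω : Finset β) (P : Finset γ) (good : γ → β → Prop) [∀ p, DecidablePred (good p)] {b m : ℕ}
    (hbad : ∀ p ∈ P, #{ω ∈ Ω | ¬ good p ω} ≤ b) (hlt : #P * b ^ m < #Ω ^ m) :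
    ∃ 𝒰 ⊆ Ω, #𝒰 ≤ m ∧ ∀ p ∈ P, ∃ U ∈ 𝒰, good p U := by
  obtain ⟨f, hfΩ, hf⟩ :
      ∃ f ∈ Fintype.piFinset fun _ : Fin m ↦ Ω, ∀ p ∈ P, ∃ i, good p (f i) := by
    by_contra! h
    have hcover : Fintype.piFinset (fun _ : Fin m ↦ Ω) ⊆
        P.biUnion fun p ↦ Fintype.piFinset fun _ : Fin m ↦ {ω ∈ Ω | ¬ good p ω} := by
      intro f hf
      obtain ⟨p, hp, hfp⟩ := h f hf
      simp only [mem_biUnion, Fintype.mem_piFinset, mem_filter] at hf ⊢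
      exact ⟨p, hp, fun i ↦ ⟨hf i, hfp i⟩⟩
    have := (card_le_card hcover).trans <| card_biUnion_le_card_mul _ _ (b ^ m) fun p hp ↦ by
      rw [Fintype.card_piFinset_const]
      exact Nat.pow_le_pow_left (hbad p hp) m
    rw [Fintype.card_piFinset_const] at this
    omega
  rw [Fintype.mem_piFinset] at hfΩ
  refine ⟨univ.image f, ?_, card_image_le.trans_eq (card_fin m), fun p hp ↦ ?_⟩
  · simpa [image_subset_iff] using hfΩ
  · obtain ⟨i, hi⟩ := hf p hp
    exact ⟨f i, mem_image_of_mem f (mem_univ i), hi⟩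

theorem two_mul_pow_succ_le_succ_pow_succ (b : ℕ) : 2 * b ^ (b + 1) ≤ (b + 1) ^ (b + 1) := by
  have bernoulli := pow_add_mul_le_add_pow (a := b) (b := 1) (Nat.zero_le b) (by omega) (b + 1)
  rw [Nat.add_sub_cancel, mul_one, Nat.cast_id] at bernoulli
  have hle : b ^ (b + 1) ≤ (b + 1) * b ^ b := by rw [pow_succ']; gcongr; omega
  omega

theorem mul_pow_lt_succ_pow_of_lt_two_pow {N t : ℕ} (b : ℕ) (hN : N < 2 ^ t) :
    N * b ^ ((b + 1) * t) < (b + 1) ^ ((b + 1) * t) := by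
  rcases Nat.eq_zero_or_pos (b ^ ((b + 1) * t)) with hzero | hpos
  · rw [hzero, mul_zero]
    positivity
  calc N * b ^ ((b + 1) * t) < 2 ^ t * b ^ ((b + 1) * t) := by gcongr
    _ = (2 * b ^ (b + 1)) ^ t := by rw [mul_pow, pow_mul]
    _ ≤ ((b + 1) ^ (b + 1)) ^ t := by gcongr; exact two_mul_pow_succ_le_succ_pow_succ b
    _ = (b + 1) ^ ((b + 1) * t) := (pow_mul _ _ _).symm

theorem choose_mul_two_pow_lt (n k : ℕ) :
    n.choose k * 2 ^ k < 2 ^ ((Nat.log 2 n + 2) * k + 1) := by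
  have hn : n < 2 ^ (Nat.log 2 n + 1) := Nat.lt_pow_succ_log_self one_lt_two n
  calc n.choose k * 2 ^ k ≤ (2 ^ (Nat.log 2 n + 1)) ^ k * 2 ^ k := by
        gcongr
        exact (Nat.choose_le_pow n k).trans (Nat.pow_le_pow_left hn.le k)
    _ = 2 ^ ((Nat.log 2 n + 2) * k) := by rw [← pow_mul, ← pow_add]; ring_nf
    _ < 2 ^ ((Nat.log 2 n + 2) * k + 1) := Nat.pow_lt_pow_succ one_lt_two

theorem two_pow_mul_succ_mul_add_one_le (k L : ℕ) (hL : 1 ≤ L) :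
    2 ^ k * ((L + 1) * k + 1) ≤ 2 ^ (2 * k) * 2 * L := by
  have hk : k + 1 ≤ 2 ^ k := Nat.lt_two_pow_self
  calc 2 ^ k * ((L + 1) * k + 1) ≤ 2 ^ k * ((2 * L) * 2 ^ k) := by gcongr; nlinarith
    _ = 2 ^ (2 * k) * 2 * L := by ring

section Trace
variable {α : Type*} [DecidableEq α]

theorem card_powerset_filter_inter_eq {D S S' : Finset α} (hS : S ⊆ D) (hS' : S' ⊆ S) :
    #{U ∈ D.powerset | S ∩ U = S'} = 2 ^ (#D - #S) := by
  rw [← card_sdiff_of_subset hS, ← card_powerset]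
  refine card_bij' (fun U _ ↦ U \ S) (fun V _ ↦ V ∪ S') ?_ ?_ ?_ ?_ <;> intro U hU <;>
    simp only [mem_filter, mem_powerset, subset_iff, Finset.ext_iff, mem_sdiff, mem_union,
      mem_inter] at hU ⊢ <;> grind

theorem card_powerset_filter_inter_ne {D S S' : Finset α} (hS : S ⊆ D) (hS' : S' ⊆ S) :
    #{U ∈ D.powerset | ¬ S ∩ U = S'} = (2 ^ #S - 1) * 2 ^ (#D - #S) := by
  have := card_filter_add_card_filter_not (s := D.powerset) (fun U ↦ S ∩ U = S')
  rw [card_powerset_filter_inter_eq hS hS', card_powerset, ← Nat.add_sub_of_le (card_le_card hS),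
    pow_add, Nat.add_sub_cancel_left] at this
  rw [Nat.sub_one_mul]
  omega

theorem exists_shatters_forall_mem_powersetCard {D : Finset α} {k : ℕ} (t : ℕ) (hk : k ≤ #D)
    (ht : (#D).choose k * 2 ^ k < 2 ^ t) :
    ∃ 𝒰 ⊆ D.powerset, #𝒰 ≤ 2 ^ k * t ∧ ∀ S ∈ D.powersetCard k, 𝒰.Shatters S := by
  set P := (D.powersetCard k).sigma powerset
  have hP : #P = (#D).choose k * 2 ^ k := by
    rw [card_sigma, sum_congr rfl fun S hS ↦ by rw [card_powerset, (mem_powersetCard.1 hS).2],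
      sum_const, card_powersetCard, smul_eq_mul]
  have hbad : ∀ p ∈ P, #{U ∈ D.powerset | ¬ p.1 ∩ U = p.2} ≤ (2 ^ k - 1) * 2 ^ (#D - k) := by
    rintro ⟨S, S'⟩ hp
    obtain ⟨hS, hS'⟩ := mem_sigma.1 hp
    obtain ⟨hSD, rfl⟩ := mem_powersetCard.1 hS
    exact (card_powerset_filter_inter_ne hSD (mem_powerset.1 hS')).le
  obtain ⟨b, hb⟩ : ∃ b, 2 ^ k = b + 1 := ⟨2 ^ k - 1, (Nat.sub_add_cancel Nat.one_le_two_pow).symm⟩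
  have hlt : #P * ((2 ^ k - 1) * 2 ^ (#D - k)) ^ (2 ^ k * t) < #D.powerset ^ (2 ^ k * t) := by
    rw [card_powerset, ← Nat.add_sub_of_le hk, Nat.add_sub_cancel_left, pow_add, mul_pow, mul_pow,
      ← mul_assoc, hb, Nat.add_sub_cancel]
    gcongr
    exact mul_pow_lt_succ_pow_of_lt_two_pow b (hP ▸ ht)
  obtain ⟨𝒰, h𝒰D, h𝒰card, h𝒰⟩ :=
    exists_subset_card_le_forall_exists_of_card_mul_pow_lt _ P _ hbad hlt
  exact ⟨𝒰, h𝒰D, h𝒰card, fun S hS S' hS' ↦ h𝒰 ⟨S, S'⟩ (mem_sigma.2 ⟨hS, mem_powerset.2 hS'⟩)⟩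

end Trace

/-- **Existence of `(n,k)`-universal sets.** There is a constant `C` such that for every
finite set `D` of size `n` and every `k ≤ n`, there is a family `𝒰` of subsets of `D`
of size at most `2^(C·k) · C · (log₂ n + 1)` such that for every `S ⊆ D` with `|S| ≤ k`
and every `S' ⊆ S`, some `U ∈ 𝒰` satisfies `U ∩ S = S'`. -/
theorem universal_set_exists :
    ∃ C : ℕ, 0 < C ∧ ∀ (α : Type) [DecidableEq α] (D : Finset α) (k : ℕ), k ≤ D.card →
      ∃ 𝒰 : Finset (Finset α), (∀ U ∈ 𝒰, U ⊆ D) ∧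
        𝒰.card ≤ 2 ^ (C * k) * C * (Nat.log 2 D.card + 1) ∧
        ∀ S : Finset α, S ⊆ D → S.card ≤ k →
          ∀ S' : Finset α, S' ⊆ S → ∃ U ∈ 𝒰, U ∩ S = S' := by
  refine ⟨2, two_pos, fun α _ D k hk ↦ ?_⟩
  obtain ⟨𝒰, h𝒰D, h𝒰card, h𝒰⟩ :=
    exists_shatters_forall_mem_powersetCard _ hk (choose_mul_two_pow_lt #D k)
  refine ⟨𝒰, fun U hU ↦ mem_powerset.1 (h𝒰D hU), ?_, fun S hSD hSk S' hS' ↦ ?_⟩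
  · calc #𝒰 ≤ 2 ^ k * ((Nat.log 2 #D + 2) * k + 1) := h𝒰card
      _ ≤ 2 ^ (2 * k) * 2 * (Nat.log 2 #D + 1) :=
        two_pow_mul_succ_mul_add_one_le k _ (Nat.le_add_left 1 _)
  · obtain ⟨T, hST, hTD, hTk⟩ := exists_subsuperset_card_eq hSD hSk hk
    obtain ⟨U, hU, hSU⟩ := (h𝒰 T (mem_powersetCard.2 ⟨hTD, hTk⟩)).mono_right hST hS'
    exact ⟨U, hU, inter_comm U S ▸ hSU⟩
end

section
/- Let A and B be finite sets with |A| = n and |B| = q, and let k ≤ n. Given, for each i in [⌈log₂ q⌉], an (n,k)-universal set family U_i over A, and a surjection h from bit-vectors of length ⌈log₂ q⌉ (viewed as integers in [2^{⌈log₂ q⌉}]) onto B, the family of functions F = { x ↦ h(g(I_{U_1}(x), ..., I_{U_{q'}}(x))) : (U_1,...,U_{q'}) ∈ U_1 × ... × U_{q'} } is an (n,k,q)-universal function family: for every S ⊆ A with |S| ≤ k, every function from S to B arises as the restriction of some f ∈ F. -/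
/-- **Universal function families from universal sets.** Let `|A| = n`, `|B| = q`,
`k ≤ n` and `q' = ⌈log₂ q⌉`. Given `(n,k)`-universal set families `𝒰 i` over `A` for
each `i ∈ [q']`, and a surjection `h` from length-`q'` bit vectors onto `B`, the family
of functions `x ↦ h (fun i => [x ∈ U i])` over choices `(U 1, …, U q') ∈ 𝒰 1 × ⋯ × 𝒰 q'`
is an `(n,k,q)`-universal function family: for every `S ⊆ A` with `|S| ≤ k`, every
function `S → B` is realized as a restriction of some member. -/
theorem universal_function_family {α β : Type} [Fintype α] [Fintype β] [DecidableEq α]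
    (k : ℕ) (hk : k ≤ Fintype.card α)
    (q' : ℕ) (hq' : q' = Nat.clog 2 (Fintype.card β))
    (𝒰 : Fin q' → Finset (Finset α))
    (huniv : ∀ (i : Fin q') (S : Finset α), S.card ≤ k →
      ∀ S' ⊆ S, ∃ U ∈ 𝒰 i, U ∩ S = S')
    (h : (Fin q' → Bool) → β) (hsurj : Function.Surjective h) :
    ∀ S : Finset α, S.card ≤ k → ∀ g : α → β,
      ∃ choice : Fin q' → Finset α, (∀ i, choice i ∈ 𝒰 i) ∧
        ∀ x ∈ S, h (fun i => decide (x ∈ choice i)) = g x := by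
  intro S hS g
  choose b hb using fun x => hsurj (g x)
  choose U hU hUS using fun i : Fin q' =>
    huniv i S hS (S.filter (fun x => b x i = true)) (Finset.filter_subset _ _)
  refine ⟨U, hU, fun x hx => ?_⟩
  have : (fun i => decide (x ∈ U i)) = b x := by
    funext i
    have := hUS i
    have hmem : x ∈ U i ↔ b x i = true := by
      constructor
      · intro hxu
        have hm : x ∈ U i ∩ S := Finset.mem_inter.2 ⟨hxu, hx⟩
        rw [hUS i] at hm
        exact (Finset.mem_filter.1 hm).2
      · intro hbi
        have : x ∈ S.filter (fun x => b x i = true) := Finset.mem_filter.2 ⟨hx, hbi⟩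
        rw [← hUS i] at this
        exact (Finset.mem_inter.1 this).1
    by_cases hc : x ∈ U i
    · simp [hc, hmem.1 hc]
    · simp [hc]
      exact Bool.eq_false_iff.2 (fun hb' => hc (hmem.2 hb'))
  rw [this, hb]
end

section
/- Let G be an undirected graph with terminal set T ⊆ V(G) and partition (T_1, ..., T_s) of T. Let R ⊆ V(G) \ T and let bypass_R(G) be the graph on V(G) \ R with an edge uv whenever uv ∈ E(G) or there is a u–v path in G all of whose internal vertices lie in R. Then for any U ⊆ V(G) \ R disjoint from T, U is a restricted multiway cut of (T_1,...,T_s) in G if and only if U is a restricted multiway cut of (T_1,...,T_s) in bypass_R(G). -/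
open SimpleGraph

section Aux

variable {V : Type} (G : SimpleGraph V) (R : Set V) (B : SimpleGraph ↥(Rᶜ)) (U : Set V)

lemma mwc_walk_to_induce {a b : V} (p : G.Walk a b) :
    (∀ x ∈ p.support, x ∉ U) → ∀ (ha : a ∈ Uᶜ) (hb : b ∈ Uᶜ),
      (G.induce Uᶜ).Reachable ⟨a, ha⟩ ⟨b, hb⟩ := by
  induction p with
  | nil => intro _ ha hb; exact Reachable.refl _
  | @cons u v w hadj q ih =>
    intro h ha hb
    have hv : v ∉ U := h v (by simp)
    have hadj' : (G.induce Uᶜ).Adj ⟨u, ha⟩ ⟨v, hv⟩ := hadj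
    exact hadj'.reachable.trans (ih (fun x hx => h x (by simp [hx])) hv hb)

lemma mwc_splitR {c b : V} (q : G.Walk c b) :
    b ∈ Rᶜ → ∃ (w : V) (hw : w ∈ Rᶜ) (pre : G.Walk c w) (suf : G.Walk w b),
      q = pre.append suf ∧ ∀ x ∈ pre.support, x ≠ w → x ∈ R := by
  induction q with
  | nil => intro hb; exact ⟨_, hb, .nil, .nil, rfl, by simp⟩
  | @cons u v' w' hadj q ih =>
    intro hb
    by_cases hu : u ∈ Rᶜ
    · exact ⟨u, hu, .nil, .cons hadj q, rfl, by simp⟩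
    · obtain ⟨w, hw, pre, suf, heq, hR⟩ := ih hb
      refine ⟨w, hw, .cons hadj pre, suf, by rw [heq]; rfl, ?_⟩
      intro x hx hxw
      rcases List.mem_cons.mp ((Walk.support_cons hadj pre) ▸ hx) with h | h
      · exact h ▸ (not_not.mp (by simpa using hu))
      · exact hR x h hxw

lemma mwc_compress
    (hB : ∀ u v : ↥(Rᶜ), B.Adj u v ↔
      (G.Adj (u : V) (v : V) ∨ ∃ p : G.Walk (u : V) (v : V), p.IsPath ∧ 0 < p.length ∧
        ∀ x ∈ p.support, x ≠ (u : V) → x ≠ (v : V) → x ∈ R)) :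
    ∀ (n : ℕ) {a b : V} (ha : a ∈ Rᶜ) (hb : b ∈ Rᶜ) (p : G.Walk a b),
      p.length ≤ n → (∀ x ∈ p.support, x ∉ U) →
      ∀ (haU : a ∉ U) (hbU : b ∉ U),
      (B.induce {x : ↥(Rᶜ) | (x : V) ∉ U}).Reachable ⟨⟨a, ha⟩, haU⟩ ⟨⟨b, hb⟩, hbU⟩ := by
  classical
  intro n
  induction n with
  | zero =>
    intro a b ha hb p hlen hsup haU hbU
    cases p with
    | nil => exact Reachable.refl _
    | cons hadj q => simp at hlen
  | succ n ih =>
    intro a b ha hb p hlen hsup haU hbU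
    cases p with
    | nil => exact Reachable.refl _
    | @cons _ v _ hadj q =>
      obtain ⟨w, hw, pre, suf, heq, hR⟩ := mwc_splitR G R q hb
      have hsufsub : ∀ x ∈ suf.support, x ∈ q.support := by
        intro x hx
        rw [heq]
        exact (Walk.mem_support_append_iff _ _).mpr (Or.inr hx)
      have hsufU : ∀ x ∈ suf.support, x ∉ U := fun x hx =>
        hsup x (by simp [hsufsub x hx])
      have hwU : w ∉ U := hsufU w suf.start_mem_support
      have hsuflen : suf.length ≤ n := by
        have : q.length = pre.length + suf.length := by rw [heq, Walk.length_append]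
        have hql : q.length ≤ n := by simpa using hlen
        omega
      by_cases haw : a = w
      · subst haw
        exact ih ha hb suf hsuflen hsufU haU hbU
      · -- build the B-edge from a to w
        set P : G.Walk a w := Walk.cons hadj pre with hP
        have hPsup : ∀ x ∈ P.support, x ≠ a → x ≠ w → x ∈ R := by
          intro x hx hxa hxw
          rcases List.mem_cons.mp ((Walk.support_cons hadj pre) ▸ hx) with h | h
          · exact absurd h hxa
          · exact hR x h hxw
        have hbp := P.bypass
        have hlenpos : 0 < P.bypass.length := by
          rcases Nat.eq_zero_or_pos P.bypass.length with h0 | h0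
          · exact absurd (Walk.eq_of_length_eq_zero h0) haw
          · exact h0
        have hadjB : B.Adj ⟨a, ha⟩ ⟨w, hw⟩ := by
          rw [hB]
          exact Or.inr ⟨P.bypass, P.bypass_isPath, hlenpos,
            fun x hx => hPsup x (P.support_bypass_subset hx)⟩
        have hadjBI : (B.induce {x : ↥(Rᶜ) | (x : V) ∉ U}).Adj
            ⟨⟨a, ha⟩, haU⟩ ⟨⟨w, hw⟩, hwU⟩ := hadjB
        exact hadjBI.reachable.trans (ih hw hb suf hsuflen hsufU hwU hbU)

lemma mwc_expand (hUR : U ⊆ Rᶜ)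
    (hB : ∀ u v : ↥(Rᶜ), B.Adj u v ↔
      (G.Adj (u : V) (v : V) ∨ ∃ p : G.Walk (u : V) (v : V), p.IsPath ∧ 0 < p.length ∧
        ∀ x ∈ p.support, x ≠ (u : V) → x ≠ (v : V) → x ∈ R))
    (x y : ↥{x : ↥(Rᶜ) | (x : V) ∉ U})
    (p : (B.induce {x : ↥(Rᶜ) | (x : V) ∉ U}).Walk x y) :
    (G.induce Uᶜ).Reachable ⟨(x.1 : V), x.2⟩ ⟨(y.1 : V), y.2⟩ := by
  induction p with
  | nil => exact Reachable.refl _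
  | @cons u v w hadj q ih =>
    have hadjB : B.Adj u.1 v.1 := hadj
    have step : (G.induce Uᶜ).Reachable ⟨(u.1 : V), u.2⟩ ⟨(v.1 : V), v.2⟩ := by
      rcases (hB u.1 v.1).mp hadjB with h | ⟨pw, _, _, hint⟩
      · exact (Adj.reachable (h : (G.induce Uᶜ).Adj ⟨(u.1 : V), u.2⟩ ⟨(v.1 : V), v.2⟩))
      · refine mwc_walk_to_induce G U pw ?_ u.2 v.2
        intro z hz hzU
        by_cases hzu : z = (u.1 : V)
        · exact u.2 (hzu ▸ hzU)
        by_cases hzv : z = (v.1 : V)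
        · exact v.2 (hzv ▸ hzU)
        exact (hUR hzU) (hint z hz hzu hzv)
    exact step.trans ih

end Aux

/-- **Bypassing preserves restricted multiway cuts.** Let `(T₁, …, T_s)` partition the
terminal set (disjoint from `R`), and let `B = bypass_R(G)` be the graph on `V ∖ R` with
an edge `uv` whenever `uv ∈ E(G)` or there is a `u`–`v` path in `G` all of whose internal
vertices lie in `R`. Then for every `U ⊆ V ∖ R` disjoint from the terminals, `U` is a
restricted multiway cut of the partition in `G` iff it is one in `bypass_R(G)`. -/
theorem bypass_preserves_multiway_cut {V : Type} [Fintype V] (G : SimpleGraph V)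
    {s : ℕ} (Ts : Fin s → Set V)
    (R : Set V) (hTR : ∀ i, ∀ t ∈ Ts i, t ∈ Rᶜ)
    (B : SimpleGraph ↥(Rᶜ))
    (hB : ∀ u v : ↥(Rᶜ), B.Adj u v ↔
      (G.Adj (u : V) (v : V) ∨ ∃ p : G.Walk (u : V) (v : V), p.IsPath ∧ 0 < p.length ∧
        ∀ x ∈ p.support, x ≠ (u : V) → x ≠ (v : V) → x ∈ R))
    (U : Set V) (hUR : U ⊆ Rᶜ) (hUT : ∀ i, ∀ t ∈ Ts i, t ∉ U) :
    (∀ i j, i ≠ j → ∀ ti (h1 : ti ∈ Ts i), ∀ tj (h2 : tj ∈ Ts j),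
       ¬ (G.induce Uᶜ).Reachable ⟨ti, hUT i ti h1⟩ ⟨tj, hUT j tj h2⟩) ↔
    (∀ i j, i ≠ j → ∀ ti (h1 : ti ∈ Ts i), ∀ tj (h2 : tj ∈ Ts j),
       ¬ (B.induce {x : ↥(Rᶜ) | (x : V) ∉ U}).Reachable
          ⟨⟨ti, hTR i ti h1⟩, hUT i ti h1⟩ ⟨⟨tj, hTR j tj h2⟩, hUT j tj h2⟩) := by
  constructor
  · intro hG i j hij ti h1 tj h2 hreach
    obtain ⟨p⟩ := hreach
    exact hG i j hij ti h1 tj h2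
      (mwc_expand G R B U hUR hB ⟨⟨ti, hTR i ti h1⟩, hUT i ti h1⟩
        ⟨⟨tj, hTR j tj h2⟩, hUT j tj h2⟩ p)
  · intro hBcut i j hij ti h1 tj h2 hreach
    obtain ⟨p⟩ := hreach
    let f : G.induce Uᶜ →g G := ⟨Subtype.val, fun h => h⟩
    have hsup : ∀ x ∈ (p.map f).support, x ∉ U := by
      intro x hx
      rw [Walk.support_map, List.mem_map] at hx
      obtain ⟨y, _, rfl⟩ := hx
      exact y.2
    exact hBcut i j hij ti h1 tj h2
      (mwc_compress G R B U hB (p.map f).length (hTR i ti h1) (hTR j tj h2)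
        (p.map f) le_rfl hsup (hUT i ti h1) (hUT j tj h2))
end

section
/- Let X_C ⊆ V(G) and let H be a subgraph of G such that X_C is a minimum-size odd cycle transversal of H and each connected component of H contains at most z vertices of X_C (an X_C-certificate of order z). Suppose D is a connected component of H − X_C satisfying: (1) for each x ∈ X_C in the same component H' as D for which H[{x} ∪ V(D)] contains an odd cycle, at least z other components D' of H − X_C satisfy that H[{x} ∪ V(D')] contains an odd cycle; and (2) for each pair of distinct x, y ∈ X_C ∩ V(H') and each parity p, if H[{x,y} ∪ V(D)] contains an x–y path of parity p, then at least z other components D' satisfy that H[{x,y} ∪ V(D')] contains an x–y path of parity p. Then oct(H) = oct(H − V(D)). -/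
open SimpleGraph

/-- `H` is an `XC`-certificate of order `z` in `G`. -/
def IsCert {V : Type*} (G : SimpleGraph V) (H : G.Subgraph) (XC : Set V) (z : ℕ) : Prop :=
  XC ⊆ H.verts ∧
  IsOCT H.coe {x : ↥H.verts | (x : V) ∈ XC} ∧
  (∀ S : Set ↥H.verts, IsOCT H.coe S → XC.ncard ≤ S.ncard) ∧
  ∀ v : ↥H.verts, {u : ↥H.verts | H.coe.Reachable u v ∧ (u : V) ∈ XC}.ncard ≤ z

/-- `D` is (the vertex set of) a connected component of `H − XC`. -/
def IsDelComp {V : Type*} {G : SimpleGraph V} (H : G.Subgraph) (XC D : Set V) : Prop :=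
  ∃ v : ↥(H.deleteVerts XC).verts,
    D = Subtype.val '' {u : ↥(H.deleteVerts XC).verts |
      (H.deleteVerts XC).coe.Reachable u v}

/-- The subgraph of `H` induced on `S` contains an odd cycle. -/
def OddCycleIn {V : Type*} {G : SimpleGraph V} (H : G.Subgraph) (S : Set V) : Prop :=
  ∃ (v : ↥H.verts) (c : H.coe.Walk v v), c.IsCycle ∧ Odd c.length ∧
    ∀ x ∈ c.support, (x : V) ∈ S

/-- The subgraph of `H` induced on `S` contains an `x`–`y` path of parity `p`. -/
def ParityPathIn {V : Type*} {G : SimpleGraph V} (H : G.Subgraph)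
    (x y : V) (S : Set V) (p : ℕ) : Prop :=
  ∃ (hx : x ∈ H.verts) (hy : y ∈ H.verts) (w : H.coe.Walk ⟨x, hx⟩ ⟨y, hy⟩),
    w.IsPath ∧ w.length % 2 = p ∧ ∀ u ∈ w.support, (u : V) ∈ S

/-- `x` and `d` lie in the same connected component of `H`. -/
def SameCompH {V : Type*} {G : SimpleGraph V} (H : G.Subgraph) (x d : V) : Prop :=
  ∃ (hx : x ∈ H.verts) (hd : d ∈ H.verts), H.coe.Reachable ⟨x, hx⟩ ⟨d, hd⟩

/-!
Write `Γ` for `H` viewed as a graph on `V`. Optimality gives `oct H = |XC|`, and `XC` is still a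
transversal of `H − D`, so it suffices that `|XC| ≤ |T|` whenever `T ∪ D` is a transversal of `Γ`.
Let `C` be the component of `Γ` containing `D`. If `|T ∩ C| ≥ |XC ∩ C|`, trading
`T ∩ C` for `XC ∩ C` gives a transversal of `H` that is no larger than `T`. Otherwise `T` meets
`C` in fewer than `z` vertices, so among any `z` components of `H − XC` inside `C` one avoids `T`,
and `T` itself is a transversal of `H`: on an odd closed walk avoiding `T`, every passage
`x, (vertices of D), y` with `x, y ∈ XC` can be traded for an `x`–`y` walk of the same parity
avoiding `T ∪ D`. For `x = y` criterion (1) forces the passage to be even, so it can be dropped;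
for `x ≠ y` criterion (2) supplies a path of the same parity through a component `D' ≠ D` that
avoids `T`. Trading every passage leaves an odd closed walk avoiding `T ∪ D`, a contradiction.
-/

namespace SimpleGraph.Walk

variable {W : Type*} {Γ : SimpleGraph W} {A : Set W}

theorem length_induce {s : Set W} {u v : W} (w : Γ.Walk u v) (hw : ∀ x ∈ w.support, x ∈ s) :
    (w.induce s hw).length = w.length := by
  have := congrArg length (w.map_induce hw)
  rwa [length_map] at this

theorem connectedComponentMk_eq_of_mem_support {u v a : W} (w : Γ.Walk u v)
    (ha : a ∈ w.support) : Γ.connectedComponentMk a = Γ.connectedComponentMk u := by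
  classical
  exact ConnectedComponent.sound ⟨(w.takeUntil a ha).reverse⟩

theorem exists_isPath_or_isCycle {u v : W} (w : Γ.Walk u v) :
    (∃ p : Γ.Walk u v, p.IsPath ∧ p.length % 2 = w.length % 2 ∧ p.support ⊆ w.support) ∨
    ∃ (a : W) (c : Γ.Walk a a), c.IsCycle ∧ Odd c.length ∧ c.support ⊆ w.support := by
  classical
  induction w with
  | nil => exact .inl ⟨nil, by simp, rfl, List.Subset.refl _⟩
  | @cons u u₁ v h w ih =>
    rcases ih with ⟨p, hp, hpar, hsub⟩ | ⟨a, c, hc, hodd, hsub⟩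
    · by_cases hu : u ∈ p.support
      · have hlen : (p.takeUntil u hu).length + (p.dropUntil u hu).length = p.length := by
          rw [← length_append, take_spec]
        by_cases hodd : Odd (p.takeUntil u hu).length
        · refine .inl ⟨p.dropUntil u hu, hp.dropUntil hu, ?_,
            List.Subset.trans (List.Subset.trans (p.support_dropUntil_subset_support hu) hsub)
              (List.subset_cons_self _ _)⟩
          rw [Nat.odd_iff] at hodd
          simp only [length_cons]
          omega
        · -- the first return of `p` to `u` closes an odd cycle
          refine .inr ⟨u, cons h (p.takeUntil u hu), ?_, ?_, ?_⟩
          · refine (cons_isCycle_iff _ h).2 ⟨hp.takeUntil hu, fun he => hodd ?_⟩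
            rw [(hp.takeUntil hu).length_eq_one_of_mem_edges (Sym2.eq_swap ▸ he)]
            exact odd_one
          · simpa [Nat.odd_add_one] using hodd
          · simp only [support_cons]
            exact List.cons_subset_cons _
              (List.Subset.trans (p.support_takeUntil_subset_support hu) hsub)
      · exact .inl ⟨cons h p, hp.cons hu, by simp [hpar, Nat.add_mod], List.cons_subset_cons _ hsub⟩
    · exact .inr ⟨a, c, hc, hodd, List.Subset.trans hsub (List.subset_cons_self _ _)⟩

theorem mem_support_cons_concat_iff {x u u' y a : W} (hxu : Γ.Adj x u) (r : Γ.Walk u u')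
    (hu'y : Γ.Adj u' y) :
    a ∈ (cons hxu (r.concat hu'y)).support ↔ a = x ∨ a ∈ r.support ∨ a = y := by
  simp [support_concat]

theorem exists_mem_of_odd_of_support_subset_insert {x u : W} (c : Γ.Walk u u)
    (hodd : Odd c.length) (hc : ∀ a ∈ c.support, a ∈ insert x A) : ∃ a ∈ c.support, a ∈ A := by
  cases c with
  | nil => simp at hodd
  | @cons _ u₁ _ h p =>
    by_cases hux : u = x
    · refine ⟨u₁, by simp, (hc u₁ (by simp)).resolve_left ?_⟩
      exact hux ▸ h.ne.symm
    · exact ⟨u, by simp, (hc u (by simp)).resolve_left hux⟩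

theorem IsPath.exists_mem_of_support_subset_insert {x y : W} {p : Γ.Walk x y} (hp : p.IsPath)
    (hxy : x ≠ y) (hlen : p.length ≠ 1) (hsub : ∀ a ∈ p.support, a ∈ insert x (insert y A)) :
    ∃ a ∈ p.support, a ∈ A := by
  cases p with
  | nil => exact absurd rfl hxy
  | @cons _ x₁ _ h q =>
    rcases hsub x₁ (by simp) with hx₁ | rfl | hx₁
    · exact absurd hx₁ h.ne.symm
    · rw [(isPath_iff_nil.1 hp.of_cons).eq_nil] at hlen
      simp at hlen
    · exact ⟨x₁, by simp, hx₁⟩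

end SimpleGraph.Walk

theorem Set.exists_mem_disjoint_of_ncard_inter_lt {α : Type*} [Finite α] {𝒟 : Set (Set α)}
    {S R : Set α} (hdisj : 𝒟.PairwiseDisjoint id) (hR : ∀ A ∈ 𝒟, A ⊆ R)
    (h : (S ∩ R).ncard < 𝒟.ncard) : ∃ A ∈ 𝒟, Disjoint A S := by
  by_contra! hmeet
  obtain ⟨A₀, hA₀⟩ := Set.nonempty_of_ncard_ne_zero (by omega : 𝒟.ncard ≠ 0)
  have : Nonempty α := (Set.not_disjoint_iff.1 (hmeet A₀ hA₀)).nonempty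
  choose! f hfA hfS using fun A hA => Set.not_disjoint_iff.1 (hmeet A hA)
  refine h.not_ge (Set.ncard_le_ncard_of_injOn f (fun A hA => ⟨hfS A hA, hR A hA (hfA A hA)⟩)
    fun A hA B hB hAB => ?_)
  by_contra hne
  exact Set.disjoint_left.1 (hdisj hA hB hne) (hfA A hA) (hAB ▸ hfA B hB)

section OddCycleTransversal

variable {W : Type*} {Γ : SimpleGraph W} {S S' : Set W}

theorem isOCT_iff :
    IsOCT Γ S ↔ ∀ ⦃u⦄ (w : Γ.Walk u u), (∀ a ∈ w.support, a ∉ S) → Even w.length := by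
  rw [IsOCT, two_colorable_iff_forall_loop_even]
  refine ⟨fun h u w hw => ?_, fun h u w => ?_⟩
  · simpa [Walk.length_induce] using h _ (w.induce Sᶜ hw)
  · refine Walk.length_map (Embedding.induce Sᶜ).toHom w ▸ h (w.map _) fun a ha => ?_
    rw [Walk.support_map, List.mem_map] at ha
    obtain ⟨b, -, rfl⟩ := ha
    exact b.2

theorem IsOCT.mono (h : IsOCT Γ S) (hSS' : S ⊆ S') : IsOCT Γ S' :=
  isOCT_iff.2 fun _ w hw => isOCT_iff.1 h w fun a ha haS => hw a ha (hSS' haS)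

theorem oct_eq_ncard (hS : IsOCT Γ S) (hmin : ∀ S', IsOCT Γ S' → S.ncard ≤ S'.ncard) :
    oct Γ = S.ncard :=
  le_antisymm (Nat.sInf_le ⟨S, rfl, hS⟩)
    (le_csInf ⟨_, S, rfl, hS⟩ fun _ ⟨S', hn, hS'⟩ => hn ▸ hmin S' hS')

theorem IsOCT.diff_union_inter {A B : Set W} (hA : IsOCT Γ A) (hB : IsOCT Γ B)
    (C : Γ.ConnectedComponent) : IsOCT Γ ((B \ C.supp) ∪ (A ∩ C.supp)) := by
  refine isOCT_iff.2 fun u w hw => ?_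
  have hC : ∀ a ∈ w.support, (a ∈ C.supp ↔ u ∈ C.supp) := fun a ha => by
    simp only [ConnectedComponent.mem_supp_iff, w.connectedComponentMk_eq_of_mem_support ha]
  by_cases hu : u ∈ C.supp
  · exact isOCT_iff.1 hA w fun a ha haA => hw a ha (.inr ⟨haA, (hC a ha).2 hu⟩)
  · exact isOCT_iff.1 hB w fun a ha haB => hw a ha (.inl ⟨haB, mt (hC a ha).1 hu⟩)

end OddCycleTransversal

namespace SimpleGraph

open Walk

variable {W : Type*} {Γ : SimpleGraph W} {T D : Set W}

def CanReroute (Γ : SimpleGraph W) (T D : Set W) : Prop :=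
  ∀ ⦃x u u' y : W⦄ (r : Γ.Walk u u'), x ∉ T ∪ D → y ∉ T ∪ D → Γ.Adj x u → Γ.Adj u' y →
    (∀ a ∈ r.support, a ∈ D) →
    ∃ q : Γ.Walk x y, (∀ a ∈ q.support, a ∉ T ∪ D) ∧ q.length % 2 = r.length % 2

theorem CanReroute.exists_walk (h : CanReroute Γ T D) {u v : W} (w : Γ.Walk u v)
    (hw : ∀ a ∈ w.support, a ∉ T) (hu : u ∉ D) (hv : v ∉ D) :
    ∃ w' : Γ.Walk u v, (∀ a ∈ w'.support, a ∉ T ∪ D) ∧ w'.length % 2 = w.length % 2 := by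
  -- a walk starting inside `D` also reports its initial passage `r` through `D`
  suffices key : (u ∉ D → ∃ w' : Γ.Walk u v,
        (∀ a ∈ w'.support, a ∉ T ∪ D) ∧ w'.length % 2 = w.length % 2) ∧
      (u ∈ D → ∃ (u' y : W) (r : Γ.Walk u u') (s : Γ.Walk y v), (∀ a ∈ r.support, a ∈ D) ∧
        Γ.Adj u' y ∧ (∀ a ∈ s.support, a ∉ T ∪ D) ∧
        (r.length + 1 + s.length) % 2 = w.length % 2) from key.1 hu
  clear hu
  induction w with
  | nil =>
    exact ⟨fun hu => ⟨nil, by simpa using ⟨hw _ (by simp), hu⟩, rfl⟩, fun hu => absurd hu hv⟩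
  | @cons u u₁ v h' w ih =>
    obtain ⟨ih₁, ih₂⟩ := ih (fun a ha => hw a (by simp [ha])) hv
    refine ⟨fun hu => ?_, fun hu => ?_⟩ <;> by_cases hu₁ : u₁ ∈ D
    · obtain ⟨u', y, r, s, hr, hy, hs, hpar⟩ := ih₂ hu₁
      obtain ⟨q, hq, hqpar⟩ :=
        h r (by simp [hw u (by simp), hu]) (hs y s.start_mem_support) h' hy hr
      refine ⟨q.append s, fun a ha => ?_, ?_⟩
      · rcases (mem_support_append_iff _ _).1 ha with ha | ha
        exacts [hq a ha, hs a ha]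
      · simp only [length_append, length_cons]
        omega
    · obtain ⟨w', hw', hpar⟩ := ih₁ hu₁
      refine ⟨cons h' w', fun a ha => ?_, by simp only [length_cons]; omega⟩
      rcases List.mem_cons.1 (support_cons _ _ ▸ ha) with rfl | ha
      exacts [by simp [hw a (by simp), hu], hw' a ha]
    · obtain ⟨u', y, r, s, hr, hy, hs, hpar⟩ := ih₂ hu₁
      refine ⟨u', y, cons h' r, s, fun a ha => ?_, hy, hs, by simp only [length_cons]; omega⟩
      rcases List.mem_cons.1 (support_cons _ _ ▸ ha) with rfl | ha
      exacts [hu, hr a ha]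
    · obtain ⟨w', hw', hpar⟩ := ih₁ hu₁
      refine ⟨u, u₁, nil, w', by simpa using hu, h', hw', ?_⟩
      simp only [length_nil, length_cons]
      omega

theorem CanReroute.isOCT (h : CanReroute Γ T D) (hTD : IsOCT Γ (T ∪ D)) (hD : IsOCT Γ Dᶜ) :
    IsOCT Γ T := by
  classical
  refine isOCT_iff.2 fun u w hw => ?_
  by_cases hall : ∀ a ∈ w.support, a ∈ D
  · exact isOCT_iff.1 hD w fun a ha h' => h' (hall a ha)
  push Not at hall
  obtain ⟨x, hxw, hxD⟩ := hall
  obtain ⟨w', hw', hpar⟩ := h.exists_walk (w.rotate x hxw)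
    (fun a ha => hw a ((w.mem_support_rotate_iff x hxw).1 ha)) hxD hxD
  have := isOCT_iff.1 hTD w' hw'
  rw [Nat.even_iff] at this ⊢
  rw [length_rotate] at hpar
  omega

end SimpleGraph

namespace SimpleGraph.Subgraph

open Walk

variable {V : Type*} {G : SimpleGraph V} (K : G.Subgraph)

theorem mem_verts_of_mem_support {u v a : V} (w : K.spanningCoe.Walk u v) (hu : u ∈ K.verts)
    (ha : a ∈ w.support) : a ∈ K.verts := by
  induction w with
  | nil => simp_all
  | cons h w ih =>
    rcases List.mem_cons.1 (support_cons _ _ ▸ ha) with rfl | ha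
    exacts [hu, ih (K.edge_vert h.symm) ha]

-- `K.coe` is by definition the subgraph of `K.spanningCoe` induced on `K.verts`.
def induceSpanningCoeIso : K.spanningCoe.induce K.verts ≃g K.coe := Iso.refl

variable {K} in
def walkCoe {u v : V} (w : K.spanningCoe.Walk u v) (hw : ∀ a ∈ w.support, a ∈ K.verts) :
    K.coe.Walk ⟨u, hw u w.start_mem_support⟩ ⟨v, hw v w.end_mem_support⟩ :=
  (w.induce K.verts hw).map K.induceSpanningCoeIso.toHom

section walkCoe

variable {K} {u v : V} (w : K.spanningCoe.Walk u v) (hw : ∀ a ∈ w.support, a ∈ K.verts)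

@[simp]
theorem length_walkCoe : (walkCoe w hw).length = w.length :=
  (length_map _ _).trans (w.length_induce hw)

@[simp]
theorem mem_support_walkCoe {a : K.verts} : a ∈ (walkCoe w hw).support ↔ ↑a ∈ w.support := by
  have h : (walkCoe w hw).support =
      (w.induce K.verts hw).support.map K.induceSpanningCoeIso.toHom :=
    Walk.support_map _ _
  simp only [h, Walk.support_induce, List.mem_map, List.mem_attachWith]
  exact ⟨fun ⟨b, hb, hba⟩ => hba ▸ hb, fun ha => ⟨a, ha, rfl⟩⟩

theorem isPath_walkCoe : (walkCoe w hw).IsPath ↔ w.IsPath := by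
  refine (isPath_map_iff_of_injective K.induceSpanningCoeIso.injective).trans ?_
  refine (isPath_map_iff_of_injective (f := (Embedding.induce K.verts).toHom)
    Subtype.val_injective).symm.trans ?_
  -- the endpoints of the two sides agree only up to definitional unfolding
  rw [map_induce]
  exact Iff.rfl

theorem isCycle_walkCoe (c : K.spanningCoe.Walk u u) (hc : ∀ a ∈ c.support, a ∈ K.verts) :
    (walkCoe c hc).IsCycle ↔ c.IsCycle := by
  refine (isCycle_map_iff_of_injective K.induceSpanningCoeIso.injective).trans ?_
  refine (isCycle_map_iff_of_injective (f := (Embedding.induce K.verts).toHom)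
    Subtype.val_injective).symm.trans ?_
  rw [map_induce]
  exact Iff.rfl

end walkCoe

theorem reachable_coe_iff {u v : K.verts} :
    K.coe.Reachable u v ↔ K.spanningCoe.Reachable u v :=
  ⟨fun ⟨w⟩ => ⟨w.map K.coeEmbeddingSpanningCoe.toHom⟩,
    fun ⟨w⟩ => ⟨walkCoe w fun _ => K.mem_verts_of_mem_support w u.2⟩⟩

theorem even_length_of_not_mem_verts {u : V} (w : K.spanningCoe.Walk u u) (hu : u ∉ K.verts) :
    Even w.length := by
  cases w with
  | nil => simp
  | cons h _ => exact absurd (K.edge_vert h) hu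

theorem isOCT_coe_iff (T : Set K.verts) :
    IsOCT K.coe T ↔ IsOCT K.spanningCoe (Subtype.val '' T) := by
  simp only [isOCT_iff]
  refine ⟨fun h u w hw => ?_, fun h u w hw => ?_⟩
  · by_cases hu : u ∈ K.verts
    · have hw' : ∀ a ∈ w.support, a ∈ K.verts := fun _ => K.mem_verts_of_mem_support w hu
      rw [← length_walkCoe w hw']
      exact h _ fun a ha haT => hw a ((mem_support_walkCoe w hw').1 ha) ⟨a, haT, rfl⟩
    · exact K.even_length_of_not_mem_verts w hu
  · rw [← length_map K.coeEmbeddingSpanningCoe.toHom]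
    refine h _ fun a ha ⟨b, hbT, hba⟩ => ?_
    rw [Walk.support_map, List.mem_map] at ha
    obtain ⟨c, hc, rfl⟩ := ha
    exact hw c hc (Subtype.ext hba ▸ hbT)

theorem isOCT_spanningCoe_deleteVerts_iff (D T : Set V) :
    IsOCT (K.deleteVerts D).spanningCoe T ↔ IsOCT K.spanningCoe (T ∪ D) := by
  simp only [isOCT_iff]
  refine ⟨fun h u w hw => ?_, fun h u w hw => ?_⟩
  · have hedges : ∀ e ∈ w.edges, e ∈ (K.deleteVerts D).spanningCoe.edgeSet := by
      intro e he
      induction e using Sym2.ind with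
      | h a b =>
        have hab : K.Adj a b := w.adj_of_mem_edges he
        have haD := hw a (w.fst_mem_support_of_mem_edges he)
        have hbD := hw b (w.snd_mem_support_of_mem_edges he)
        simp only [Set.mem_union, not_or] at haD hbD
        exact (K.deleteVerts_adj).2 ⟨K.edge_vert hab, haD.2, K.edge_vert hab.symm, hbD.2, hab⟩
    rw [← w.length_transfer hedges]
    exact h _ fun a ha => by rw [support_transfer] at ha; exact fun haT => hw a ha (.inl haT)
  · by_cases hu : u ∈ (K.deleteVerts D).verts
    · rw [← length_mapLe (spanningCoe_le_of_le (K.deleteVerts_le (s := D)))]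
      refine h _ fun a ha haTD => ?_
      rw [support_mapLe_eq_support] at ha
      have haKD := (K.deleteVerts D).mem_verts_of_mem_support w hu ha
      rcases haTD with haT | haD
      exacts [hw a ha haT, haKD.2 haD]
    · exact (K.deleteVerts D).even_length_of_not_mem_verts w hu

end SimpleGraph.Subgraph

section Certificates

open Walk Subgraph

variable {V : Type*} {G : SimpleGraph V} {H : G.Subgraph} {XC D A : Set V}

theorem sameCompH_of_reachable {x d : V} (hx : x ∈ H.verts) (hd : d ∈ H.verts)
    (h : H.spanningCoe.Reachable x d) : SameCompH H x d :=
  ⟨hx, hd, (H.reachable_coe_iff (u := ⟨x, hx⟩) (v := ⟨d, hd⟩)).2 h⟩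

theorem OddCycleIn.exists_walk {S : Set V} (h : OddCycleIn H S) :
    ∃ (u : V) (c : H.spanningCoe.Walk u u), Odd c.length ∧ ∀ a ∈ c.support, a ∈ S := by
  obtain ⟨v, c, -, hodd, hS⟩ := h
  refine ⟨_, c.map H.coeEmbeddingSpanningCoe.toHom, by rwa [length_map], fun a ha => ?_⟩
  rw [Walk.support_map, List.mem_map] at ha
  obtain ⟨b, hb, rfl⟩ := ha
  exact hS b hb

theorem oddCycleIn_of_isCycle {S : Set V} (hS : S ⊆ H.verts) {u : V}
    (c : H.spanningCoe.Walk u u) (hc : c.IsCycle) (hodd : Odd c.length)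
    (hcS : ∀ a ∈ c.support, a ∈ S) : OddCycleIn H S :=
  ⟨_, walkCoe c fun a ha => hS (hcS a ha), (isCycle_walkCoe _ _).2 hc, by simpa using hodd,
    fun a ha => hcS a ((mem_support_walkCoe _ _).1 ha)⟩

theorem ParityPathIn.exists_walk {x y : V} {S : Set V} {p : ℕ} (h : ParityPathIn H x y S p) :
    ∃ q : H.spanningCoe.Walk x y, q.IsPath ∧ q.length % 2 = p ∧ ∀ a ∈ q.support, a ∈ S := by
  obtain ⟨hx, hy, w, hw, hp, hS⟩ := h
  have hsupp := Walk.support_map H.coeEmbeddingSpanningCoe.toHom w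
  refine ⟨w.map H.coeEmbeddingSpanningCoe.toHom, hw.map H.coeEmbeddingSpanningCoe.injective,
    (congrArg (· % 2) (length_map _ _)).trans hp, fun a ha => ?_⟩
  obtain ⟨b, hb, rfl⟩ := List.mem_map.1 (hsupp ▸ ha)
  exact hS b hb

theorem parityPathIn_of_isPath {x y : V} {S : Set V} (hS : S ⊆ H.verts)
    (q : H.spanningCoe.Walk x y) (hq : q.IsPath) (hqS : ∀ a ∈ q.support, a ∈ S) :
    ParityPathIn H x y S (q.length % 2) :=
  ⟨_, _, walkCoe q fun a ha => hS (hqS a ha), (isPath_walkCoe _ _).2 hq, by simp,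
    fun a ha => hqS a ((mem_support_walkCoe _ _).1 ha)⟩

namespace IsDelComp

theorem subset (hD : IsDelComp H XC D) : D ⊆ H.verts \ XC := by
  obtain ⟨v, rfl⟩ := hD
  rintro _ ⟨u, -, rfl⟩
  exact u.2

theorem nonempty (hD : IsDelComp H XC D) : D.Nonempty := by
  obtain ⟨v, rfl⟩ := hD
  exact ⟨v, v, Reachable.refl _, rfl⟩

theorem reachable (hD : IsDelComp H XC D) {a b : V} (ha : a ∈ D) (hb : b ∈ D) :
    H.spanningCoe.Reachable a b := by
  obtain ⟨v, rfl⟩ := hD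
  obtain ⟨a, ha, rfl⟩ := ha
  obtain ⟨b, hb, rfl⟩ := hb
  exact (ha.trans hb.symm).map ((Hom.ofLE (spanningCoe_le_of_le deleteVerts_le)).comp
    (H.deleteVerts XC).coeEmbeddingSpanningCoe.toHom)

theorem mem_of_adj (hD : IsDelComp H XC D) {a b : V} (ha : a ∈ D) (hab : H.Adj a b)
    (hb : b ∉ XC) : b ∈ D := by
  obtain ⟨v, rfl⟩ := hD
  obtain ⟨a, ha, rfl⟩ := ha
  refine ⟨⟨b, H.edge_vert hab.symm, hb⟩, Reachable.trans (Adj.reachable ?_) ha, rfl⟩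
  exact (H.deleteVerts_adj).2 ⟨H.edge_vert hab.symm, hb, a.2.1, a.2.2, hab.symm⟩

theorem eq_of_mem (hD : IsDelComp H XC D) (hA : IsDelComp H XC A) {a : V} (haD : a ∈ D)
    (haA : a ∈ A) : D = A := by
  obtain ⟨v, rfl⟩ := hD
  obtain ⟨w, rfl⟩ := hA
  obtain ⟨a, hav, rfl⟩ := haD
  obtain ⟨a', haw, ha'⟩ := haA
  obtain rfl : a' = a := Subtype.ext ha'
  have hvw := hav.symm.trans haw
  ext b
  exact ⟨fun ⟨c, hc, hcb⟩ => ⟨c, hc.trans hvw, hcb⟩,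
    fun ⟨c, hc, hcb⟩ => ⟨c, hc.trans hvw.symm, hcb⟩⟩

theorem subset_supp (hD : IsDelComp H XC D) {C : H.spanningCoe.ConnectedComponent} {a : V}
    (ha : a ∈ D) (haC : a ∈ C.supp) : D ⊆ C.supp := fun b hb => by
  rw [ConnectedComponent.mem_supp_iff] at haC ⊢
  exact haC ▸ ConnectedComponent.sound (hD.reachable hb ha)

theorem disjoint (hD : IsDelComp H XC D) (hA : IsDelComp H XC A) (hne : D ≠ A) : Disjoint D A :=
  Set.disjoint_left.2 fun _ haD haA => hne (hD.eq_of_mem hA haD haA)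

end IsDelComp

theorem ncard_setOf_val_mem {s A : Set V} (hA : A ⊆ s) : {x : s | ↑x ∈ A}.ncard = A.ncard := by
  rw [← Set.ncard_image_of_injective _ Subtype.val_injective]
  exact congrArg Set.ncard ((Subtype.image_preimage_coe s A).trans (Set.inter_eq_right.2 hA))

theorem image_val_setOf_mem {s A : Set V} (hA : A ⊆ s) : Subtype.val '' {x : s | ↑x ∈ A} = A :=
  (Subtype.image_preimage_coe s A).trans (Set.inter_eq_right.2 hA)

namespace IsCert

variable {z : ℕ}

theorem isOCT (hcert : IsCert G H XC z) : IsOCT H.spanningCoe XC := by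
  simpa [image_val_setOf_mem hcert.1] using (isOCT_coe_iff H _).1 hcert.2.1

theorem ncard_le (hcert : IsCert G H XC z) {T : Set V} (hT : T ⊆ H.verts)
    (hTo : IsOCT H.spanningCoe T) : XC.ncard ≤ T.ncard := by
  have := hcert.2.2.1 {x | ↑x ∈ T} ((isOCT_coe_iff H _).2 (by rwa [image_val_setOf_mem hT]))
  rwa [ncard_setOf_val_mem hT] at this

theorem oct_eq (hcert : IsCert G H XC z) : oct H.coe = XC.ncard := by
  rw [← ncard_setOf_val_mem hcert.1]
  exact oct_eq_ncard hcert.2.1 fun S hS => (ncard_setOf_val_mem hcert.1).trans_le (hcert.2.2.1 S hS)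

theorem ncard_inter_supp_le [Finite V] (hcert : IsCert G H XC z) {v : V} (hv : v ∈ H.verts) :
    (XC ∩ (H.spanningCoe.connectedComponentMk v).supp).ncard ≤ z := by
  refine le_trans ?_ (hcert.2.2.2 ⟨v, hv⟩)
  rw [← Set.ncard_image_of_injective _ Subtype.val_injective]
  refine Set.ncard_le_ncard fun a ⟨haX, haC⟩ => ⟨⟨a, hcert.1 haX⟩, ⟨?_, haX⟩, rfl⟩
  exact (H.reachable_coe_iff).2 (ConnectedComponent.exact haC)

end IsCert

end Certificates

section Redundancy

open Walk

variable {V : Type*} {G : SimpleGraph V} {H : G.Subgraph} {XC D A T : Set V} {z : ℕ}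
  {C : H.spanningCoe.ConnectedComponent}

def OddCycleCriterion (H : G.Subgraph) (XC D : Set V) (z : ℕ) : Prop :=
  ∀ x ∈ XC, (∃ d ∈ D, SameCompH H x d) → OddCycleIn H (insert x D) →
    z ≤ {D' : Set V | IsDelComp H XC D' ∧ D' ≠ D ∧ OddCycleIn H (insert x D')}.ncard

def ParityPathCriterion (H : G.Subgraph) (XC D : Set V) (z : ℕ) : Prop :=
  ∀ x ∈ XC, ∀ y ∈ XC, x ≠ y → (∃ d ∈ D, SameCompH H x d) → (∃ d ∈ D, SameCompH H y d) →
    ∀ p : ℕ, ParityPathIn H x y (insert x (insert y D)) p →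
      z ≤ {D' : Set V | IsDelComp H XC D' ∧ D' ≠ D ∧
        ParityPathIn H x y (insert x (insert y D')) p}.ncard

theorem exists_sameCompH (hD : IsDelComp H XC D) (hDC : D ⊆ C.supp) {x : V} (hx : x ∈ H.verts)
    (hxC : x ∈ C.supp) : ∃ d ∈ D, SameCompH H x d := by
  obtain ⟨d, hd⟩ := hD.nonempty
  exact ⟨d, hd, sameCompH_of_reachable hx (hD.subset hd).1
    (ConnectedComponent.exact (hxC.trans (hDC hd).symm))⟩

theorem OddCycleIn.subset_supp (hA : IsDelComp H XC A) (hXC : IsOCT H.spanningCoe XC)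
    {x : V} (hxC : x ∈ C.supp) (h : OddCycleIn H (insert x A)) : A ⊆ C.supp := by
  obtain ⟨u, c, hodd, hc⟩ := h.exists_walk
  have hxc : x ∈ c.support := by
    by_contra hxc
    refine Nat.not_even_iff_odd.2 hodd (isOCT_iff.1 hXC c fun a ha haX => ?_)
    exact (hA.subset ((hc a ha).resolve_left (ne_of_mem_of_not_mem ha hxc))).2 haX
  obtain ⟨a, hac, haA⟩ := c.exists_mem_of_odd_of_support_subset_insert hodd hc
  refine hA.subset_supp haA ?_
  rw [ConnectedComponent.mem_supp_iff, c.connectedComponentMk_eq_of_mem_support hac,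
    ← c.connectedComponentMk_eq_of_mem_support hxc]
  exact hxC

theorem even_of_oddCycleCriterion [Finite V] (hD : IsDelComp H XC D)
    (hXC : IsOCT H.spanningCoe XC) (hXCv : XC ⊆ H.verts) (hDC : D ⊆ C.supp)
    (hTD : IsOCT H.spanningCoe (T ∪ D)) (hT : (T ∩ C.supp).ncard < z) (crit1 : OddCycleCriterion H XC D z) {x : V} (hx : x ∈ XC)
    (hxT : x ∉ T) (hxC : x ∈ C.supp) {u : V} (c : H.spanningCoe.Walk u u)
    (hc : ∀ a ∈ c.support, a ∈ insert x D) : Even c.length := by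
  by_contra hodd
  obtain ⟨a, cyc, hcyc, hcodd, hsub⟩ := c.exists_isPath_or_isCycle.resolve_left
    fun ⟨p, hp, hpar, _⟩ => hodd (by simp [Nat.even_iff, ← hpar, (isPath_iff_nil.1 hp).eq_nil])
  have hxD : insert x D ⊆ H.verts := Set.insert_subset (hXCv hx) fun _ hd => (hD.subset hd).1
  have hz := crit1 x hx (exists_sameCompH hD hDC (hXCv hx) hxC)
    (oddCycleIn_of_isCycle hxD cyc hcyc hcodd fun b hb => hc b (hsub hb))
  obtain ⟨A, ⟨hA, hAD, hAcyc⟩, hAT⟩ := Set.exists_mem_disjoint_of_ncard_inter_lt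
    (fun A hA B hB hne => hA.1.disjoint hB.1 hne)
    (fun A hA => hA.2.2.subset_supp hA.1 hXC hxC) (hT.trans_le hz)
  obtain ⟨v, c', hodd', hc'⟩ := hAcyc.exists_walk
  refine Nat.not_even_iff_odd.2 hodd' (isOCT_iff.1 hTD c' fun b hb hbTD => ?_)
  rcases hc' b hb with rfl | hbA
  · exact hbTD.elim hxT fun hbD => (hD.subset hbD).2 hx
  · exact hbTD.elim (Set.disjoint_left.1 hAT hbA) (Set.disjoint_left.1 (hA.disjoint hD hAD) hbA)

theorem ParityPathIn.subset_supp {x y : V} {p : ℕ} (hA : IsDelComp H XC A) (hxy : x ≠ y)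
    (hxC : x ∈ C.supp) (hp : ¬(H.spanningCoe.Adj x y ∧ p = 1))
    (h : ParityPathIn H x y (insert x (insert y A)) p) : A ⊆ C.supp := by
  obtain ⟨q, hq, hqp, hqA⟩ := h.exists_walk
  have hlen : q.length ≠ 1 := fun hlen => hp ⟨q.adj_of_length_eq_one hlen, by simp [← hqp, hlen]⟩
  obtain ⟨a, haq, haA⟩ := hq.exists_mem_of_support_subset_insert hxy hlen hqA
  refine hA.subset_supp haA ?_
  rw [ConnectedComponent.mem_supp_iff, q.connectedComponentMk_eq_of_mem_support haq]
  exact hxC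

theorem exists_walk_of_parityPathCriterion [Finite V] (hD : IsDelComp H XC D)
    (hXCv : XC ⊆ H.verts) (hDC : D ⊆ C.supp) (hT : (T ∩ C.supp).ncard < z)
    (crit2 : ParityPathCriterion H XC D z) {x y : V} (hx : x ∈ XC) (hy : y ∈ XC)
    (hxT : x ∉ T) (hyT : y ∉ T) (hxy : x ≠ y) (hxC : x ∈ C.supp) (hyC : y ∈ C.supp)
    (π : H.spanningCoe.Walk x y) (hπ : π.IsPath)
    (hπD : ∀ a ∈ π.support, a ∈ insert x (insert y D)) :
    ∃ q : H.spanningCoe.Walk x y, (∀ a ∈ q.support, a ∉ T ∪ D) ∧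
      q.length % 2 = π.length % 2 := by
  have hxD : ∀ {a}, a ∈ XC → a ∉ D := fun ha hD' => (hD.subset hD').2 ha
  -- the edge `xy` counts as a path through every component, so criterion (2) says nothing
  by_cases hedge : H.spanningCoe.Adj x y ∧ π.length % 2 = 1
  · refine ⟨hedge.1.toWalk, fun a ha => ?_, by simp [hedge.2]⟩
    rcases List.mem_pair.1 (by simpa using ha) with rfl | rfl
    exacts [fun h => h.elim hxT (hxD hx), fun h => h.elim hyT (hxD hy)]
  have hS : insert x (insert y D) ⊆ H.verts :=
    Set.insert_subset (hXCv hx) (Set.insert_subset (hXCv hy) fun _ hd => (hD.subset hd).1)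
  have hz := crit2 x hx y hy hxy (exists_sameCompH hD hDC (hXCv hx) hxC)
    (exists_sameCompH hD hDC (hXCv hy) hyC) _ (parityPathIn_of_isPath hS π hπ hπD)
  obtain ⟨A, ⟨hA, hAD, hApath⟩, hAT⟩ := Set.exists_mem_disjoint_of_ncard_inter_lt
    (fun A hA B hB hne => hA.1.disjoint hB.1 hne)
    (fun A hA => hA.2.2.subset_supp hA.1 hxy hxC hedge) (hT.trans_le hz)
  obtain ⟨q, -, hqp, hqA⟩ := hApath.exists_walk
  refine ⟨q, fun b hb hbTD => ?_, hqp⟩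
  rcases hqA b hb with rfl | rfl | hbA
  · exact hbTD.elim hxT (hxD hx)
  · exact hbTD.elim hyT (hxD hy)
  · exact hbTD.elim (Set.disjoint_left.1 hAT hbA) (Set.disjoint_left.1 (hA.disjoint hD hAD) hbA)

theorem canReroute_of_criteria [Finite V] (hD : IsDelComp H XC D)
    (hXC : IsOCT H.spanningCoe XC) (hXCv : XC ⊆ H.verts) (hDC : D ⊆ C.supp)
    (hTD : IsOCT H.spanningCoe (T ∪ D)) (hT : (T ∩ C.supp).ncard < z)
    (crit1 : OddCycleCriterion H XC D z) (crit2 : ParityPathCriterion H XC D z) :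
    H.spanningCoe.CanReroute T D := by
  intro x u u' y r hx hy hxu hu'y hr
  have hu := hr u r.start_mem_support
  have hu' := hr u' r.end_mem_support
  simp only [Set.mem_union, not_or] at hx hy
  have hxX : x ∈ XC := by_contra fun h => hx.2 (hD.mem_of_adj hu hxu.symm h)
  have hyX : y ∈ XC := by_contra fun h => hy.2 (hD.mem_of_adj hu' hu'y h)
  have hxC : x ∈ C.supp := (C.mem_supp_congr_adj hxu).2 (hDC hu)
  have hyC : y ∈ C.supp := (C.mem_supp_congr_adj hu'y).1 (hDC hu')
  rcases eq_or_ne x y with rfl | hxy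
  · -- criterion (1) makes the closed passage even, so it can simply be dropped
    refine ⟨nil, by simpa using hx, ?_⟩
    have := even_of_oddCycleCriterion hD hXC hXCv hDC hTD hT crit1 hxX hx.1 hxC
      (cons hxu (r.concat hu'y)) fun a ha => ?_
    · rw [length_cons, length_concat, Nat.even_iff] at this
      simp only [length_nil]
      omega
    · rcases (mem_support_cons_concat_iff hxu r hu'y).1 ha with rfl | ha | rfl
      exacts [Set.mem_insert _ _, Set.mem_insert_of_mem _ (hr a ha), Set.mem_insert _ _]
  obtain ⟨π, hπ, hπr, hπsub⟩ | ⟨a, c, -, hodd, hc⟩ := r.exists_isPath_or_isCycle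
  · have hpath : (cons hxu (π.concat hu'y)).IsPath :=
      (hπ.concat (fun h => hy.2 (hr _ (hπsub h))) hu'y).cons fun h => by
        rw [support_concat, List.mem_append, List.mem_singleton] at h
        exact h.elim (fun h => hx.2 (hr _ (hπsub h))) hxy
    obtain ⟨q, hq, hqpar⟩ := exists_walk_of_parityPathCriterion hD hXCv hDC hT crit2 hxX hyX
      hx.1 hy.1 hxy hxC hyC _ hpath fun a ha => by
        rcases (mem_support_cons_concat_iff hxu π hu'y).1 ha with rfl | ha | rfl
        exacts [Set.mem_insert _ _, Set.mem_insert_of_mem _ (Set.mem_insert_of_mem _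
          (hr a (hπsub ha))), Set.mem_insert_of_mem _ (Set.mem_insert _ _)]
    refine ⟨q, hq, ?_⟩
    rw [hqpar, length_cons, length_concat]
    omega
  · refine absurd (isOCT_iff.1 hXC c fun b hb hbX => ?_) (Nat.not_even_iff_odd.2 hodd)
    exact (hD.subset (hr b (hc hb))).2 hbX

theorem ncard_le_of_isOCT_union [Finite V] (hcert : IsCert G H XC z) (hD : IsDelComp H XC D)
    (crit1 : OddCycleCriterion H XC D z) (crit2 : ParityPathCriterion H XC D z)
    (hTv : T ⊆ H.verts) (hTD : IsOCT H.spanningCoe (T ∪ D)) : XC.ncard ≤ T.ncard := by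
  obtain ⟨d, hd⟩ := hD.nonempty
  set C := H.spanningCoe.connectedComponentMk d
  have hDC : D ⊆ C.supp := hD.subset_supp hd rfl
  by_cases hlt : (T ∩ C.supp).ncard < (XC ∩ C.supp).ncard
  · refine hcert.ncard_le hTv ((canReroute_of_criteria hD hcert.isOCT hcert.1 hDC hTD
      (hlt.trans_le (hcert.ncard_inter_supp_le (hD.subset hd).1)) crit1 crit2).isOCT hTD ?_)
    exact hcert.isOCT.mono fun a haX haD => (hD.subset haD).2 haX
  · have hT' : IsOCT H.spanningCoe ((T \ C.supp) ∪ (XC ∩ C.supp)) := by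
      have := hcert.isOCT.diff_union_inter hTD C
      rwa [Set.union_sdiff_distrib, Set.sdiff_eq_empty.2 hDC, Set.union_empty] at this
    calc XC.ncard ≤ ((T \ C.supp) ∪ (XC ∩ C.supp)).ncard :=
          hcert.ncard_le (Set.union_subset (Set.sdiff_subset.trans hTv)
            (Set.inter_subset_left.trans hcert.1)) hT'
      _ ≤ (T \ C.supp).ncard + (XC ∩ C.supp).ncard := Set.ncard_union_le _ _
      _ ≤ (T ∩ C.supp).ncard + (T \ C.supp).ncard := by omega
      _ = T.ncard := Set.ncard_inter_add_ncard_sdiff_eq_ncard _ _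

end Redundancy

/-- **Redundant components of a certificate.** If `H` is an `XC`-certificate of order `z`
and `D` is a component of `H − XC` such that (1) every `x ∈ XC` in the component of `H`
containing `D` for which `H[{x} ∪ D]` has an odd cycle also has `z` further components
`D' ≠ D` with an odd cycle in `H[{x} ∪ D']`, and (2) every pair `x ≠ y` of such vertices
and each parity `p` for which `H[{x,y} ∪ D]` has an `x`–`y` path of parity `p` also has
`z` further components `D' ≠ D` providing such a path, then `oct(H) = oct(H − D)`. -/
theorem redundant_component {V : Type} [Fintype V] (G : SimpleGraph V)
    (H : G.Subgraph) (XC : Set V) (z : ℕ) (hcert : IsCert G H XC z)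
    (D : Set V) (hD : IsDelComp H XC D)
    (crit1 : ∀ x ∈ XC, (∃ d ∈ D, SameCompH H x d) →
      OddCycleIn H (insert x D) →
      z ≤ {D' : Set V | IsDelComp H XC D' ∧ D' ≠ D ∧
            OddCycleIn H (insert x D')}.ncard)
    (crit2 : ∀ x ∈ XC, ∀ y ∈ XC, x ≠ y →
      (∃ d ∈ D, SameCompH H x d) → (∃ d ∈ D, SameCompH H y d) →
      ∀ p : ℕ, ParityPathIn H x y (insert x (insert y D)) p →
        z ≤ {D' : Set V | IsDelComp H XC D' ∧ D' ≠ D ∧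
              ParityPathIn H x y (insert x (insert y D')) p}.ncard) :
    oct H.coe = oct (H.deleteVerts D).coe := by
  have hXC : XC ⊆ (H.deleteVerts D).verts := fun x hx =>
    ⟨hcert.1 hx, fun hxD => (hD.subset hxD).2 hx⟩
  rw [hcert.oct_eq, ← ncard_setOf_val_mem hXC]
  refine (oct_eq_ncard ?_ fun S hS => ?_).symm
  · rw [Subgraph.isOCT_coe_iff, image_val_setOf_mem hXC,
      Subgraph.isOCT_spanningCoe_deleteVerts_iff]
    exact hcert.isOCT.mono Set.subset_union_left
  · rw [ncard_setOf_val_mem hXC, ← Set.ncard_image_of_injective S Subtype.val_injective]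
    rw [Subgraph.isOCT_coe_iff, Subgraph.isOCT_spanningCoe_deleteVerts_iff] at hS
    exact ncard_le_of_isOCT_union hcert hD crit1 crit2
      (fun _ ⟨a, _, ha⟩ => ha ▸ a.2.1) hS
end

section
/- The 3-SAT reduction is correct: given a 3-CNF formula with n variables and m clauses, build G with a triangle per variable containing vertices v_i, v̄_i, and for each clause φ_j a gadget with designated vertices s_1, s_2, s_3 identified with the literal vertices, containing two disjoint triangles, such that G contains n + 2m vertex-disjoint triangles. Then the formula is satisfiable if and only if G has an odd cycle transversal of size at most n + 2m. -/
open SimpleGraph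

/-- The vertex type of the 3-SAT reduction graph: a triangle `(i,0) = v_i`,
`(i,1) = v̄_i`, `(i,2)` per variable `i`, and per clause `j` eight gadget vertices
`(j,0), …, (j,5) = a₁, …, a₆` and `(j,6) = b₁`, `(j,7) = b₂`. -/
abbrev SatV (n m : ℕ) := (Fin n × Fin 3) ⊕ (Fin m × Fin 8)

/-- The variable-gadget vertex representing a literal: `(i, true) ↦ v_i = (i,0)` and
`(i, false) ↦ v̄_i = (i,1)`. -/
def litVert {n : ℕ} (lit : Fin n × Bool) : Fin n × Fin 3 :=
  (lit.1, if lit.2 then 0 else 1)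

/-- The (pre-symmetrization) adjacency of the 3-SAT reduction graph: each variable gets
a triangle; in the gadget of clause `j` the vertices `a₁–a₂–⋯–a₆` form a path, the
literal vertex `s_r` of the `r`-th literal is adjacent to `a_{2r-1}, a_{2r}`, and
`b₁`, `b₂` are adjacent to `a₂, a₃` and `a₄, a₅` respectively. -/
def satRel {n m : ℕ} (cl : Fin m → Fin 3 → Fin n × Bool) :
    SatV n m → SatV n m → Prop := fun x y =>
  match x, y with
  | Sum.inl (i, a), Sum.inl (i', b) => i = i' ∧ a ≠ b
  | Sum.inl p, Sum.inr (j, t) =>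
      ∃ r : Fin 3, litVert (cl j r) = p ∧
        ((t : ℕ) = 2 * (r : ℕ) ∨ (t : ℕ) = 2 * (r : ℕ) + 1)
  | Sum.inr (j, t), Sum.inr (j', t') => j = j' ∧
      (((t' : ℕ) = (t : ℕ) + 1 ∧ (t : ℕ) ≤ 4) ∨
       ((t : ℕ) = 6 ∧ ((t' : ℕ) = 1 ∨ (t' : ℕ) = 2)) ∨
       ((t : ℕ) = 7 ∧ ((t' : ℕ) = 3 ∨ (t' : ℕ) = 4)))
  | _, _ => False

/-- The 3-SAT reduction graph. -/
def satGraph {n m : ℕ} (cl : Fin m → Fin 3 → Fin n × Bool) : SimpleGraph (SatV n m) :=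
  SimpleGraph.fromRel (satRel cl)

namespace SatRed

/-- The two gadget vertices removed when the `r`-th literal of the clause is true. -/
def rv (r : Fin 3) (k : Bool) : Fin 8 :=
  if k then ![4,4,3] r else ![2,1,1] r

/-- The 2-coloring of the gadget remainder when the `r`-th literal is true. -/
def col (r : Fin 3) (t : Fin 8) : Fin 2 :=
  ![![1,0,0,1,0,1,1,0], ![1,0,0,1,0,1,1,0], ![1,0,1,0,0,1,0,1]] r t

lemma col_edge : ∀ (r : Fin 3) (t t' : Fin 8),
    (((t' : ℕ) = (t : ℕ) + 1 ∧ (t : ℕ) ≤ 4) ∨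
     ((t : ℕ) = 6 ∧ ((t' : ℕ) = 1 ∨ (t' : ℕ) = 2)) ∨
     ((t : ℕ) = 7 ∧ ((t' : ℕ) = 3 ∨ (t' : ℕ) = 4))) →
    t ≠ rv r false → t ≠ rv r true → t' ≠ rv r false → t' ≠ rv r true →
    col r t ≠ col r t' := by decide

lemma col_lit : ∀ (r r' : Fin 3) (t : Fin 8), r' ≠ r →
    ((t : ℕ) = 2 * (r' : ℕ) ∨ (t : ℕ) = 2 * (r' : ℕ) + 1) →
    t ≠ rv r false → t ≠ rv r true → col r t = 1 := by decide

lemma fin3_helper : ∀ (k a b : Fin 3), k ≠ 2 → a ≠ b → a ≠ k → b ≠ k →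
    (if a = 2 then (1:Fin 2) else 0) ≠ (if b = 2 then 1 else 0) := by decide

variable {n m : ℕ} (cl : Fin m → Fin 3 → Fin n × Bool)

lemma adj_var (i : Fin n) {a b : Fin 3} (h : a ≠ b) :
    (satGraph cl).Adj (Sum.inl (i,a)) (Sum.inl (i,b)) := by
  rw [satGraph, fromRel_adj]
  exact ⟨by simp [h], Or.inl ⟨rfl, h⟩⟩

lemma adj_gadget (j : Fin m) {t t' : Fin 8}
    (h : ((t' : ℕ) = (t : ℕ) + 1 ∧ (t : ℕ) ≤ 4) ∨
       ((t : ℕ) = 6 ∧ ((t' : ℕ) = 1 ∨ (t' : ℕ) = 2)) ∨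
       ((t : ℕ) = 7 ∧ ((t' : ℕ) = 3 ∨ (t' : ℕ) = 4))) :
    (satGraph cl).Adj (Sum.inr (j,t)) (Sum.inr (j,t')) := by
  rw [satGraph, fromRel_adj]
  refine ⟨?_, Or.inl ⟨rfl, h⟩⟩
  simp only [ne_eq, Sum.inr.injEq, Prod.mk.injEq, not_and]
  intro _ ht
  subst ht
  rcases h with ⟨h1,h2⟩|⟨h1,h2⟩|⟨h1,h2⟩ <;> omega

lemma adj_lit (j : Fin m) (r : Fin 3) {t : Fin 8}
    (h : (t : ℕ) = 2 * (r : ℕ) ∨ (t : ℕ) = 2 * (r : ℕ) + 1) :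
    (satGraph cl).Adj (Sum.inl (litVert (cl j r))) (Sum.inr (j,t)) := by
  rw [satGraph, fromRel_adj]
  exact ⟨Sum.inl_ne_inr, Or.inl ⟨r, rfl, h⟩⟩

/-- The `n + 2m` disjoint triangles, indexed by `Fin n ⊕ Bool × Fin m`. -/
def triple {n m : ℕ} : (Fin n ⊕ Bool × Fin m) → SatV n m × SatV n m × SatV n m
  | .inl i => (.inl (i,0), .inl (i,1), .inl (i,2))
  | .inr (false, j) => (.inr (j,1), .inr (j,2), .inr (j,6))
  | .inr (true, j) => (.inr (j,3), .inr (j,4), .inr (j,7))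

def tEquiv (n m : ℕ) : (Fin n ⊕ Bool × Fin m) ≃ Fin (n + 2*m) :=
  ((Equiv.refl (Fin n)).sumCongr
    (((finTwoEquiv.symm).prodCongr (Equiv.refl (Fin m))).trans finProdFinEquiv)).trans
    finSumFinEquiv

def T (n m : ℕ) (a : Fin (n + 2*m)) : SatV n m × SatV n m × SatV n m :=
  triple ((tEquiv n m).symm a)

lemma triple_disj {n m : ℕ} (y y' : Fin n ⊕ Bool × Fin m) (h : y ≠ y') :
    ∀ x ∈ ({(triple y).1, (triple y).2.1, (triple y).2.2} : Set (SatV n m)),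
      x ∉ ({(triple y').1, (triple y').2.1, (triple y').2.2} : Set (SatV n m)) := by
  rcases y with i|⟨k,j⟩
  · rcases y' with i'|⟨k',j'⟩
    · have hii : i ≠ i' := fun hh => h (by rw [hh])
      intro x hx hx'
      simp only [triple, Set.mem_insert_iff, Set.mem_singleton_iff] at hx hx'
      rcases hx with rfl|rfl|rfl <;> rcases hx' with hh|hh|hh <;>
        simp_all [Prod.ext_iff]
    · rcases k' with _|_ <;>
      · intro x hx hx'
        simp only [triple, Set.mem_insert_iff, Set.mem_singleton_iff] at hx hx'
        rcases hx with rfl|rfl|rfl <;> simp_all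
  · rcases y' with i'|⟨k',j'⟩
    · rcases k with _|_ <;>
      · intro x hx hx'
        simp only [triple, Set.mem_insert_iff, Set.mem_singleton_iff] at hx hx'
        rcases hx with rfl|rfl|rfl <;> simp_all
    · rcases k with _|_ <;> rcases k' with _|_
      case' false.false => have hjj : j ≠ j' := fun hh => h (by rw [hh])
      case' true.true => have hjj : j ≠ j' := fun hh => h (by rw [hh])
      all_goals
        intro x hx hx'
        simp only [triple, Set.mem_insert_iff, Set.mem_singleton_iff] at hx hx'
        rcases hx with rfl|rfl|rfl <;> rcases hx' with hh|hh|hh <;>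
          simp_all [Prod.ext_iff]

lemma triple_mem_gadget {n m : ℕ} (y : Fin n ⊕ Bool × Fin m) (j : Fin m) (t : Fin 8)
    (h : (Sum.inr (j,t) : SatV n m) ∈
      ({(triple y).1, (triple y).2.1, (triple y).2.2} : Set (SatV n m))) :
    t = 1 ∨ t = 2 ∨ t = 6 ∨ t = 3 ∨ t = 4 ∨ t = 7 := by
  rcases y with i|⟨_|_,j'⟩ <;> simp_all [triple, Prod.ext_iff] <;> tauto

lemma count_lemma {α : Type*} [Fintype α] {N : ℕ} (S : Set α) (V : Fin N → Set α)
    (hdisj : ∀ a b, a ≠ b → ∀ x ∈ V a, x ∉ V b)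
    (hhit : ∀ a, ∃ x, x ∈ S ∧ x ∈ V a) (hcard : S.ncard ≤ N) :
    (∀ x ∈ S, ∃ a, x ∈ V a) ∧
      ∀ a x y, x ∈ S → y ∈ S → x ∈ V a → y ∈ V a → x = y := by
  classical
  choose f hfS hfV using hhit
  have hinj : Function.Injective fun a => (⟨f a, hfS a⟩ : S) := by
    intro a b hab
    by_contra hne
    have hfab : f a = f b := congrArg Subtype.val hab
    exact hdisj a b hne (f a) (hfV a) (hfab ▸ hfV b)
  have hcard' : Fintype.card (Fin N) = Fintype.card S := by
    have h1 : N ≤ Nat.card S := by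
      simpa using Nat.card_le_card_of_injective _ hinj
    have h2 : Nat.card S ≤ N := by
      rwa [Nat.card_coe_set_eq]
    simp [Nat.card_eq_fintype_card] at h1 h2
    simp; omega
  have hbij := (Fintype.bijective_iff_injective_and_card _).2 ⟨hinj, hcard'⟩
  constructor
  · intro x hx
    obtain ⟨a, ha⟩ := hbij.2 ⟨x, hx⟩
    have : x = f a := (congrArg Subtype.val ha).symm
    exact ⟨a, this ▸ hfV a⟩
  · intro a x y hxS hyS hxV hyV
    have key : ∀ z, z ∈ S → z ∈ V a → z = f a := by
      intro z hzS hzV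
      obtain ⟨b, hb⟩ := hbij.2 ⟨z, hzS⟩
      have hz : z = f b := (congrArg Subtype.val hb).symm
      have hba : b = a := by
        by_contra hne
        exact hdisj b a hne z (hz ▸ hfV b) hzV
      rw [hz, hba]
    rw [key x hxS hxV, key y hyS hyV]

end SatRed

/-- **Correctness of the 3-SAT reduction.** The constructed graph contains `n + 2m`
vertex-disjoint triangles, and the formula (clause `j` having literals `cl j 0`,
`cl j 1`, `cl j 2`, a literal being a variable together with a sign) is satisfiable iff
the graph has an odd cycle transversal of size at most `n + 2m`. -/
theorem sat_reduction_correct {n m : ℕ} (cl : Fin m → Fin 3 → Fin n × Bool) :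
    (∃ T : Fin (n + 2 * m) → SatV n m × SatV n m × SatV n m,
      (∀ a, (satGraph cl).Adj (T a).1 (T a).2.1 ∧
            (satGraph cl).Adj (T a).2.1 (T a).2.2 ∧
            (satGraph cl).Adj (T a).1 (T a).2.2) ∧
      (∀ a b, a ≠ b →
        ∀ x ∈ ({(T a).1, (T a).2.1, (T a).2.2} : Set (SatV n m)),
          x ∉ ({(T b).1, (T b).2.1, (T b).2.2} : Set (SatV n m)))) ∧
    ((∃ A : Fin n → Bool, ∀ j : Fin m, ∃ r : Fin 3, A (cl j r).1 = (cl j r).2) ↔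
      ∃ S : Set (SatV n m), IsOCT (satGraph cl) S ∧ S.ncard ≤ n + 2 * m) := by
  classical
  -- Part 1: the disjoint triangles
  have hTadj : ∀ a, (satGraph cl).Adj (SatRed.T n m a).1 (SatRed.T n m a).2.1 ∧
      (satGraph cl).Adj (SatRed.T n m a).2.1 (SatRed.T n m a).2.2 ∧
      (satGraph cl).Adj (SatRed.T n m a).1 (SatRed.T n m a).2.2 := by
    intro a
    rcases hy : (SatRed.tEquiv n m).symm a with i | ⟨k, j⟩
    · simp only [SatRed.T, hy, SatRed.triple]
      exact ⟨SatRed.adj_var cl i (by decide), SatRed.adj_var cl i (by decide),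
        SatRed.adj_var cl i (by decide)⟩
    · rcases k with _ | _ <;> simp only [SatRed.T, hy, SatRed.triple]
      · exact ⟨SatRed.adj_gadget cl j (by decide),
          (SatRed.adj_gadget cl j (t := 6) (t' := 2) (by decide)).symm,
          (SatRed.adj_gadget cl j (t := 6) (t' := 1) (by decide)).symm⟩
      · exact ⟨SatRed.adj_gadget cl j (by decide),
          (SatRed.adj_gadget cl j (t := 7) (t' := 4) (by decide)).symm,
          (SatRed.adj_gadget cl j (t := 7) (t' := 3) (by decide)).symm⟩
  have hTdisj : ∀ a b, a ≠ b →
      ∀ x ∈ ({(SatRed.T n m a).1, (SatRed.T n m a).2.1, (SatRed.T n m a).2.2} :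
        Set (SatV n m)),
        x ∉ ({(SatRed.T n m b).1, (SatRed.T n m b).2.1, (SatRed.T n m b).2.2} :
          Set (SatV n m)) := by
    intro a b hab
    exact SatRed.triple_disj _ _ (fun h => hab ((SatRed.tEquiv n m).symm.injective h))
  refine ⟨⟨SatRed.T n m, hTadj, hTdisj⟩, ?_, ?_⟩
  · -- satisfiable → small OCT
    rintro ⟨A, hA⟩
    choose rstar hrstar using hA
    set g : (Fin n ⊕ Bool × Fin m) → SatV n m :=
      Sum.elim (fun i => Sum.inl (i, if A i then 0 else 1))
        (fun p => Sum.inr (p.2, SatRed.rv (rstar p.2) p.1)) with hg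
    set C : SatV n m → Fin 2 :=
      Sum.elim (fun p => if p.2 = 2 then (1:Fin 2) else 0)
        (fun q => SatRed.col (rstar q.1) q.2) with hC
    have claim : ∀ x y : SatV n m, x ∉ Set.range g → y ∉ Set.range g →
        satRel cl x y → C x ≠ C y := by
      rintro (⟨i,a⟩|⟨j,t⟩) (⟨i',b⟩|⟨j',t'⟩) hx hy hrel
      · obtain ⟨rfl, hab⟩ := hrel
        have ha : a ≠ (if A i then 0 else 1) := by
          intro hh
          exact hx ⟨Sum.inl i, by simp only [hg, Sum.elim_inl]; rw [hh]⟩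
        have hb : b ≠ (if A i then 0 else 1) := by
          intro hh
          exact hy ⟨Sum.inl i, by simp only [hg, Sum.elim_inl]; rw [hh]⟩
        have hk : (if A i then (0:Fin 3) else 1) ≠ 2 := by cases A i <;> simp
        simpa [hC] using SatRed.fin3_helper _ a b hk hab ha hb
      · obtain ⟨r, hlv, ht⟩ := hrel
        have h1 : (cl j' r).1 = i := congrArg Prod.fst hlv
        have h2 : (if (cl j' r).2 then (0:Fin 3) else 1) = a := congrArg Prod.snd hlv
        have hsign : (cl j' r).2 ≠ A (cl j' r).1 := by
          intro hh
          apply hx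
          refine ⟨Sum.inl (cl j' r).1, ?_⟩
          simp only [hg, Sum.elim_inl]
          rw [← hh, h2, h1]
        have hr : r ≠ rstar j' := by
          intro hh; rw [hh] at hsign; exact hsign (hrstar j').symm
        have hnt0 : t' ≠ SatRed.rv (rstar j') false := by
          intro hh
          exact hy ⟨Sum.inr (false, j'), by simp only [hg, Sum.elim_inr]; rw [hh]⟩
        have hnt1 : t' ≠ SatRed.rv (rstar j') true := by
          intro hh
          exact hy ⟨Sum.inr (true, j'), by simp only [hg, Sum.elim_inr]; rw [hh]⟩
        have hcol := SatRed.col_lit (rstar j') r t' hr ht hnt0 hnt1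
        have ha2 : a ≠ 2 := by
          rw [← h2]; cases (cl j' r).2 <;> simp
        simp [hC, hcol, ha2]
      · exact hrel.elim
      · obtain ⟨rfl, hrel2⟩ := hrel
        have hnt : ∀ (k : Bool) (s : Fin 8), s ≠ SatRed.rv (rstar j) k →
            True := fun _ _ _ => trivial
        have h1 : t ≠ SatRed.rv (rstar j) false := by
          intro hh
          exact hx ⟨Sum.inr (false, j), by simp only [hg, Sum.elim_inr]; rw [hh]⟩
        have h2 : t ≠ SatRed.rv (rstar j) true := by
          intro hh
          exact hx ⟨Sum.inr (true, j), by simp only [hg, Sum.elim_inr]; rw [hh]⟩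
        have h3 : t' ≠ SatRed.rv (rstar j) false := by
          intro hh
          exact hy ⟨Sum.inr (false, j), by simp only [hg, Sum.elim_inr]; rw [hh]⟩
        have h4 : t' ≠ SatRed.rv (rstar j) true := by
          intro hh
          exact hy ⟨Sum.inr (true, j), by simp only [hg, Sum.elim_inr]; rw [hh]⟩
        simpa [hC] using SatRed.col_edge (rstar j) t t' hrel2 h1 h2 h3 h4
    refine ⟨Set.range g, ?_, ?_⟩
    · refine ⟨SimpleGraph.Coloring.mk (fun v => C v.1) ?_⟩
      intro v w hadj
      have hGadj : (satGraph cl).Adj v.1 w.1 := hadj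
      rw [satGraph, fromRel_adj] at hGadj
      obtain ⟨hne, hr | hr⟩ := hGadj
      · exact claim _ _ v.2 w.2 hr
      · exact (claim _ _ w.2 v.2 hr).symm
    · rw [← Set.image_univ]
      calc (g '' Set.univ).ncard ≤ (Set.univ : Set (Fin n ⊕ Bool × Fin m)).ncard :=
            Set.ncard_image_le
        _ = n + 2 * m := by
            rw [Set.ncard_univ, Nat.card_eq_fintype_card]
            simp
  · -- small OCT → satisfiable
    rintro ⟨S, hOCT, hcard⟩
    have hhit3 : ∀ x y z : SatV n m, (satGraph cl).Adj x y → (satGraph cl).Adj y z →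
        (satGraph cl).Adj x z → x ∈ S ∨ y ∈ S ∨ z ∈ S := by
      intro x y z hxy hyz hxz
      by_contra hc
      push_neg at hc
      obtain ⟨hx, hy, hz⟩ := hc
      obtain ⟨Co⟩ := hOCT
      have e1 := Co.valid
        (show ((satGraph cl).induce Sᶜ).Adj ⟨x,hx⟩ ⟨y,hy⟩ from hxy)
      have e2 := Co.valid
        (show ((satGraph cl).induce Sᶜ).Adj ⟨y,hy⟩ ⟨z,hz⟩ from hyz)
      have e3 := Co.valid
        (show ((satGraph cl).induce Sᶜ).Adj ⟨x,hx⟩ ⟨z,hz⟩ from hxz)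
      have : ∀ u v w : Fin 2, u ≠ v → v ≠ w → u ≠ w → False := by decide
      exact this _ _ _ e1 e2 e3
    obtain ⟨hsub, hone⟩ := SatRed.count_lemma S
      (fun a => ({(SatRed.T n m a).1, (SatRed.T n m a).2.1, (SatRed.T n m a).2.2} :
        Set (SatV n m)))
      hTdisj
      (by
        intro a
        obtain ⟨h1, h2, h3⟩ := hTadj a
        rcases hhit3 _ _ _ h1 h2 h3 with h | h | h
        · exact ⟨_, h, by simp⟩
        · exact ⟨_, h, by simp⟩
        · exact ⟨_, h, by simp⟩)
      hcard
    have honetri : ∀ (y : Fin n ⊕ Bool × Fin m) (x1 x2 : SatV n m),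
        x1 ∈ S → x2 ∈ S →
        x1 ∈ ({(SatRed.triple y).1, (SatRed.triple y).2.1, (SatRed.triple y).2.2} :
          Set (SatV n m)) →
        x2 ∈ ({(SatRed.triple y).1, (SatRed.triple y).2.1, (SatRed.triple y).2.2} :
          Set (SatV n m)) → x1 = x2 := by
      intro y x1 x2 h1 h2 m1 m2
      have hT : SatRed.T n m (SatRed.tEquiv n m y) = SatRed.triple y := by
        rw [SatRed.T, Equiv.symm_apply_apply]
      exact hone (SatRed.tEquiv n m y) x1 x2 h1 h2 (by rw [hT]; exact m1)
        (by rw [hT]; exact m2)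
    have h05 : ∀ (j : Fin m) (t : Fin 8), t = 0 ∨ t = 5 → Sum.inr (j,t) ∉ S := by
      intro j t ht hmem
      obtain ⟨a, ha⟩ := hsub _ hmem
      have := SatRed.triple_mem_gadget ((SatRed.tEquiv n m).symm a) j t ha
      rcases ht with rfl | rfl <;>
        rcases this with h|h|h|h|h|h <;> exact absurd h (by decide)
    have hvar : ∀ i : Fin n, Sum.inl (i,(0:Fin 3)) ∈ S → Sum.inl (i,(1:Fin 3)) ∈ S →
        False := by
      intro i h1 h2
      have := honetri (Sum.inl i) _ _ h1 h2 (by simp [SatRed.triple])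
        (by simp [SatRed.triple])
      simp only [Sum.inl.injEq, Prod.mk.injEq] at this
      exact absurd this.2 (by decide)
    have h12 : ∀ j : Fin m, Sum.inr (j,(1:Fin 8)) ∈ S → Sum.inr (j,(2:Fin 8)) ∈ S →
        False := by
      intro j h1 h2
      have := honetri (Sum.inr (false, j)) _ _ h1 h2 (by simp [SatRed.triple])
        (by simp [SatRed.triple])
      simp only [Sum.inr.injEq, Prod.mk.injEq] at this
      exact absurd this.2 (by decide)
    have h34 : ∀ j : Fin m, Sum.inr (j,(3:Fin 8)) ∈ S → Sum.inr (j,(4:Fin 8)) ∈ S →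
        False := by
      intro j h1 h2
      have := honetri (Sum.inr (true, j)) _ _ h1 h2 (by simp [SatRed.triple])
        (by simp [SatRed.triple])
      simp only [Sum.inr.injEq, Prod.mk.injEq] at this
      exact absurd this.2 (by decide)
    refine ⟨fun i => if Sum.inl (i,(0:Fin 3)) ∈ S then true else false, ?_⟩
    intro j
    have key : ∀ r : Fin 3, Sum.inl (litVert (cl j r)) ∈ S →
        ∃ r' : Fin 3, (if Sum.inl ((cl j r').1,(0:Fin 3)) ∈ S then true else false)
          = (cl j r').2 := by
      intro r hr
      refine ⟨r, ?_⟩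
      rcases hb : (cl j r).2 with _ | _
      · simp only [litVert, hb, if_false] at hr
        have h0 : Sum.inl ((cl j r).1, (0:Fin 3)) ∉ S := fun h => hvar _ h hr
        rw [if_neg h0]
      · simp only [litVert, hb, if_true] at hr
        rw [if_pos hr]
    have tri0 := hhit3 _ _ _ (SatRed.adj_lit cl j 0 (t := 0) (by decide))
      (SatRed.adj_gadget cl j (t := 0) (t' := 1) (by decide))
      (SatRed.adj_lit cl j 0 (t := 1) (by decide))
    have tri1 := hhit3 _ _ _ (SatRed.adj_lit cl j 1 (t := 2) (by decide))
      (SatRed.adj_gadget cl j (t := 2) (t' := 3) (by decide))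
      (SatRed.adj_lit cl j 1 (t := 3) (by decide))
    have tri2 := hhit3 _ _ _ (SatRed.adj_lit cl j 2 (t := 4) (by decide))
      (SatRed.adj_gadget cl j (t := 4) (t' := 5) (by decide))
      (SatRed.adj_lit cl j 2 (t := 5) (by decide))
    rcases tri0 with h | h | h
    · exact key 0 h
    · exact absurd h (h05 j 0 (Or.inl rfl))
    rcases tri2 with h' | h' | h'
    · exact key 2 h'
    · rcases tri1 with h'' | h'' | h''
      · exact key 1 h''
      · exact (h12 j h h'').elim
      · exact (h34 j h'' h').elim
    · exact absurd h' (h05 j 5 (Or.inr rfl))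
end
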